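/- arXiv:2501.15936 — 7 statements merged into one kernel-verified Lean document; each statement's English description precedes it below -/
import Mathlib

section
/- For every integer d ≥ 4 and every ω ∈ ℝ, ∫₀^π (e^{(θ−π)ω} + e^{−(θ−π)ω}) (sin θ)^{d−2} dθ = ((d−2)(d−3)/(ω² + (d−2)²)) · ∫₀^π (e^{(θ−π)ω} + e^{−(θ−π)ω}) (sin θ)^{d−4} dθ. -/
/-!
If `g'' = c g`, then `F = g' sinⁿ⁺² - (n + 2) g cos sinⁿ⁺¹` satisfies, using `cos² = 1 - sin²`,
`F' = (c + (n + 2)²) g sinⁿ⁺² - (n + 2)(n + 1) g sinⁿ`.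
Since `F` vanishes at `0` and `π`, integrating `F'` over `[0, π]` gives the recursion; the weight
`e^{(θ-π)ω} + e^{-(θ-π)ω}` solves `g'' = ω² g`.
-/

open Real intervalIntegral

section SinPowRecursion

variable {g g' : ℝ → ℝ} {c : ℝ}

theorem hasDerivAt_deriv_mul_sin_pow_sub_mul_cos_mul_sin_pow (n : ℕ) {θ : ℝ}
    (hg : HasDerivAt g (g' θ) θ) (hg' : HasDerivAt g' (c * g θ) θ) :
    HasDerivAt (fun x => g' x * sin x ^ (n + 2) - (n + 2) * (g x * cos x) * sin x ^ (n + 1))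
      ((c + ((n : ℝ) + 2) ^ 2) * (g θ * sin θ ^ (n + 2))
        - ((n : ℝ) + 2) * ((n : ℝ) + 1) * (g θ * sin θ ^ n)) θ := by
  have hsin := hasDerivAt_sin θ
  refine ((hg'.mul (hsin.pow (n + 2))).sub
    (((hg.mul (hasDerivAt_cos θ)).const_mul ((n : ℝ) + 2)).mul (hsin.pow (n + 1)))).congr_deriv ?_
  simp only [Nat.add_sub_cancel, Pi.mul_apply, Pi.pow_apply]
  push_cast
  linear_combination
    -((n : ℝ) + 2) * ((n : ℝ) + 1) * g θ * sin θ ^ n * cos_sq' θ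

theorem integral_mul_sin_pow_add_two (n : ℕ)
    (hg : ∀ θ, HasDerivAt g (g' θ) θ) (hg' : ∀ θ, HasDerivAt g' (c * g θ) θ) :
    (c + ((n : ℝ) + 2) ^ 2) * ∫ θ in (0 : ℝ)..π, g θ * sin θ ^ (n + 2)
      = ((n : ℝ) + 2) * ((n : ℝ) + 1) * ∫ θ in (0 : ℝ)..π, g θ * sin θ ^ n := by
  have hg_cont : Continuous g := Differentiable.continuous fun θ => (hg θ).differentiableAt
  have hint : ∀ k : ℕ, IntervalIntegrable (fun θ => g θ * sin θ ^ k) MeasureTheory.volume 0 π :=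
    fun k => (by fun_prop : Continuous fun θ => g θ * sin θ ^ k).intervalIntegrable 0 π
  have hFTC := integral_eq_sub_of_hasDerivAt
    (fun θ _ => hasDerivAt_deriv_mul_sin_pow_sub_mul_cos_mul_sin_pow n (hg θ) (hg' θ))
    (((hint (n + 2)).const_mul _).sub ((hint n).const_mul _))
  rw [integral_sub ((hint (n + 2)).const_mul _) ((hint n).const_mul _),
    integral_const_mul, integral_const_mul] at hFTC
  simp only [sin_zero, sin_pi, zero_pow (by omega : n + 2 ≠ 0),
    zero_pow (by omega : n + 1 ≠ 0), mul_zero, sub_self] at hFTC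
  linarith

end SinPowRecursion

theorem hasDerivAt_sub_mul (a ω θ : ℝ) : HasDerivAt (fun x => (x - a) * ω) ω θ := by
  simpa using ((hasDerivAt_id θ).sub_const a).mul_const ω

theorem hasDerivAt_exp_mul_add_exp_neg_mul (a ω θ : ℝ) :
    HasDerivAt (fun x => exp ((x - a) * ω) + exp (-((x - a) * ω)))
      (ω * (exp ((θ - a) * ω) - exp (-((θ - a) * ω)))) θ := by
  have hlin := hasDerivAt_sub_mul a ω θ
  exact (hlin.exp.add hlin.neg.exp).congr_deriv (by simp only [Pi.neg_apply]; ring)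

theorem hasDerivAt_exp_mul_sub_exp_neg_mul (a ω θ : ℝ) :
    HasDerivAt (fun x => ω * (exp ((x - a) * ω) - exp (-((x - a) * ω))))
      (ω ^ 2 * (exp ((θ - a) * ω) + exp (-((θ - a) * ω)))) θ := by
  have hlin := hasDerivAt_sub_mul a ω θ
  exact ((hlin.exp.sub hlin.neg.exp).const_mul ω).congr_deriv (by simp only [Pi.neg_apply]; ring)

/-- Integration-by-parts recursion in the dimension `d` for the integral
`∫₀^π (e^{(θ−π)ω} + e^{−(θ−π)ω}) (sin θ)^{d−2} dθ`. -/
theorem sin_pow_exp_integral_recursion (d : ℕ) (hd : 4 ≤ d) (ω : ℝ) :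
    (∫ θ in (0:ℝ)..Real.pi,
        (Real.exp ((θ - Real.pi) * ω) + Real.exp (-((θ - Real.pi) * ω))) *
          (Real.sin θ) ^ (d - 2))
      = ((d : ℝ) - 2) * ((d : ℝ) - 3) / (ω ^ 2 + ((d : ℝ) - 2) ^ 2) *
        ∫ θ in (0:ℝ)..Real.pi,
          (Real.exp ((θ - Real.pi) * ω) + Real.exp (-((θ - Real.pi) * ω))) *
            (Real.sin θ) ^ (d - 4) := by
  obtain ⟨n, rfl⟩ := Nat.exists_eq_add_of_le' hd
  have hrec := integral_mul_sin_pow_add_two n (hasDerivAt_exp_mul_add_exp_neg_mul π ω)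
    (hasDerivAt_exp_mul_sub_exp_neg_mul π ω)
  rw [show n + 4 - 2 = n + 2 by omega, show n + 4 - 4 = n by omega]
  push_cast
  have hne : ω ^ 2 + ((n : ℝ) + 4 - 2) ^ 2 ≠ 0 := by
    rw [show (n : ℝ) + 4 - 2 = n + 2 by ring]
    positivity
  rw [div_mul_eq_mul_div, eq_div_iff hne]
  linear_combination hrec
end

section
/- Let d ≥ 4 be an even integer, set λ_k := d − 2k for k = 1, …, (d−2)/2, and c_k := (∏_{j ≠ k, 1 ≤ j ≤ (d−2)/2} (λ_j − λ_k))^{−1} (with the empty product equal to 1 when d = 4). Then for every v ∈ ℝ, 2^{d/2 − 1} Γ(d/2) · Σ_{k=1}^{(d−2)/2} c_k e^{−(d−2k)v} = (d−2) e^{−2v} (1 − e^{−2v})^{(d−4)/2}. -/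
/-!
Write `d = 2m + 2` and `x = e^{-2v}`, so that `e^{-λ_k v} = x^{m+1-k}`. Since `λ_j - λ_k = 2(k - j)`,
the product defining `c_k` is `2^{m-1} (-1)^{m-k} (k-1)! (m-k)!`, hence
`2^m Γ(m+1) c_k = 2m (-1)^{m-k} binom(m-1, k-1)`, and the sum collapses to `2m x (1-x)^{m-1}`
by the binomial theorem.
-/

open Finset Nat

section CommRing

variable {R : Type*} [CommRing R]

theorem prod_Ico_one_natCast_sub (k : ℕ) : ∏ j ∈ Ico 1 k, ((k : R) - j) = (k - 1)! := by
  calc ∏ j ∈ Ico 1 k, ((k : R) - j) = ∏ j ∈ Ico 1 k, (j : R) := by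
        refine prod_nbij' (k - ·) (k - ·) ?_ ?_ ?_ ?_ ?_ <;> intro j hj <;> simp only [mem_Ico]
          at hj ⊢
        · omega
        · omega
        · omega
        · omega
        · push_cast [Nat.cast_sub hj.2.le]; ring
    _ = (k - 1)! := by
        rcases k with _ | k
        · simp
        · rw [← Nat.cast_prod, prod_Ico_id_eq_factorial, Nat.add_sub_cancel]

theorem prod_Ioc_natCast_sub {k m : ℕ} (hkm : k ≤ m) :
    ∏ j ∈ Ioc k m, ((k : R) - j) = (-1) ^ (m - k) * (m - k)! := by
  induction m, hkm using Nat.le_induction with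
  | base => simp
  | succ m hkm ih =>
    rw [prod_Ioc_succ_top hkm, ih, Nat.succ_sub hkm, pow_succ, Nat.factorial_succ]
    push_cast [Nat.cast_sub hkm]
    ring

theorem prod_erase_Icc_natCast_sub {k m : ℕ} (hk : 1 ≤ k) (hkm : k ≤ m) :
    ∏ j ∈ (Icc 1 m).erase k, ((k : R) - j) = (-1) ^ (m - k) * (k - 1)! * (m - k)! := by
  have hsplit : (Icc 1 m).erase k = Ico 1 k ∪ Ioc k m := by ext; simp; omega
  have hdisj : Disjoint (Ico 1 k) (Ioc k m) := disjoint_left.2 fun j h h' => by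
    simp only [mem_Ico, mem_Ioc] at h h'; omega
  rw [hsplit, prod_union hdisj, prod_Ico_one_natCast_sub, prod_Ioc_natCast_sub hkm]
  ring

theorem prod_erase_Icc_sub_two_mul_sub {k m : ℕ} (hk : k ∈ Icc 1 m) (c : R) :
    ∏ j ∈ (Icc 1 m).erase k, ((c - 2 * j) - (c - 2 * k)) =
      2 ^ (m - 1) * ∏ j ∈ (Icc 1 m).erase k, ((k : R) - j) := by
  have hcard : #((Icc 1 m).erase k) = m - 1 := by
    rw [card_erase_of_mem hk, Nat.card_Icc, Nat.add_sub_cancel]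
  rw [← hcard, ← prod_const, ← prod_mul_distrib]
  exact prod_congr rfl fun j _ => by ring

theorem sum_Icc_neg_one_pow_mul_choose_mul_pow {m : ℕ} (hm : 1 ≤ m) (x : R) :
    ∑ k ∈ Icc 1 m, (-1) ^ (m - k) * ((m - 1).choose (k - 1) : R) * x ^ (m + 1 - k) =
      x * (1 - x) ^ (m - 1) := by
  obtain ⟨n, rfl⟩ := Nat.exists_eq_add_of_le' hm
  rw [← Ico_add_one_right_eq_Icc, sum_Ico_eq_sum_range, Nat.add_sub_cancel, Nat.add_sub_cancel,
    sub_eq_neg_add, add_comm (-x), add_pow, mul_sum]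
  refine sum_congr rfl fun i hi => ?_
  have hi : i ≤ n := Nat.lt_succ_iff.1 (mem_range.1 hi)
  rw [show n + 1 - (1 + i) = n - i by omega, show n + 1 + 1 - (1 + i) = n - i + 1 by omega,
    Nat.add_sub_cancel_left, neg_pow, one_pow]
  ring

end CommRing

section Field

variable {R : Type*} [Field R] [CharZero R]

theorem factorial_div_prod_erase_Icc_natCast_sub {k m : ℕ} (hk : 1 ≤ k) (hkm : k ≤ m) :
    (m ! : R) / ∏ j ∈ (Icc 1 m).erase k, ((k : R) - j) =
      (-1) ^ (m - k) * m * (m - 1).choose (k - 1) := by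
  have hfact : (m ! : R) = m * (m - 1).choose (k - 1) * (k - 1)! * (m - k)! := by
    rw [← Nat.mul_factorial_pred (by omega : m ≠ 0), ← Nat.choose_mul_factorial_mul_factorial
      (by omega : k - 1 ≤ m - 1), show m - 1 - (k - 1) = m - k by omega]
    push_cast; ring
  have hsign : ((-1 : R) ^ (m - k)) ^ 2 = 1 := by
    rw [← pow_mul, mul_comm, pow_mul, neg_one_sq, one_pow]
  rw [prod_erase_Icc_natCast_sub hk hkm, hfact]
  have h₁ : ((k - 1)! : R) ≠ 0 := Nat.cast_ne_zero.2 (factorial_ne_zero _)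
  have h₂ : ((m - k)! : R) ≠ 0 := Nat.cast_ne_zero.2 (factorial_ne_zero _)
  field_simp
  rw [hsign, mul_one]

theorem two_pow_mul_factorial_mul_inv_prod_erase_Icc_sub {k m : ℕ} (hk : k ∈ Icc 1 m) (c : R) :
    2 ^ m * m ! * (∏ j ∈ (Icc 1 m).erase k, ((c - 2 * j) - (c - 2 * k)))⁻¹ =
      2 * m * ((-1) ^ (m - k) * (m - 1).choose (k - 1)) := by
  obtain ⟨hk₁, hkm⟩ := mem_Icc.1 hk
  have htwo : (2 : R) ^ m = 2 * 2 ^ (m - 1) := (mul_pow_sub_one (by omega) 2).symm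
  have hcoef := factorial_div_prod_erase_Icc_natCast_sub (R := R) hk₁ hkm
  rw [prod_erase_Icc_sub_two_mul_sub hk, mul_inv, htwo]
  field_simp
  linear_combination hcoef

end Field

/-- Pointwise kernel identity: the moving-average kernel
`(d−2) e^{−2v} (1−e^{−2v})^{(d−4)/2}` of the derivative of the spherical average process
equals `2^{d/2−1} Γ(d/2)` times the linear combination `Σ c_k e^{−(d−2k)v}` of exponentials
associated with the eigenvalues `−λ_k = −(d−2k)` of the companion matrix. -/
theorem kernel_exponential_identity (d : ℕ) (hd : 4 ≤ d) (hde : Even d) (v : ℝ) :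
    (2 : ℝ) ^ (d / 2 - 1) * Real.Gamma ((d : ℝ) / 2) *
        ∑ k ∈ Finset.Icc 1 ((d - 2) / 2),
          (∏ j ∈ (Finset.Icc 1 ((d - 2) / 2)).erase k,
              (((d : ℝ) - 2 * j) - ((d : ℝ) - 2 * k)))⁻¹ *
            Real.exp (-(((d : ℝ) - 2 * k) * v))
      = ((d : ℝ) - 2) * Real.exp (-(2 * v)) * (1 - Real.exp (-(2 * v))) ^ ((d - 4) / 2) := by
  obtain ⟨m, rfl⟩ : ∃ m, d = 2 * m + 2 := by obtain ⟨r, rfl⟩ := hde; exact ⟨r - 1, by omega⟩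
  rw [show (2 * m + 2 - 2) / 2 = m by omega, show (2 * m + 2) / 2 - 1 = m by omega,
    show (2 * m + 2 - 4) / 2 = m - 1 by omega]
  have hΓ : Real.Gamma (((2 * m + 2 : ℕ) : ℝ) / 2) = m ! := by
    rw [← Real.Gamma_nat_eq_factorial]; push_cast; ring_nf
  have hexp (k : ℕ) (hk : k ∈ Icc 1 m) :
      Real.exp (-((((2 * m + 2 : ℕ) : ℝ) - 2 * k) * v)) = Real.exp (-(2 * v)) ^ (m + 1 - k) := by
    rw [← Real.exp_nat_mul, Nat.cast_sub (by simp at hk; omega)]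
    push_cast; ring_nf
  calc _ = 2 * m * ∑ k ∈ Icc 1 m,
        (-1) ^ (m - k) * ((m - 1).choose (k - 1) : ℝ) * Real.exp (-(2 * v)) ^ (m + 1 - k) := by
        rw [hΓ, mul_sum, mul_sum]
        refine sum_congr rfl fun k hk => ?_
        rw [← mul_assoc, two_pow_mul_factorial_mul_inv_prod_erase_Icc_sub hk, hexp k hk]
        ring
    _ = _ := by
        rw [sum_Icc_neg_one_pow_mul_choose_mul_pow (by omega)]
        push_cast; ring
end

section
/- Let d ≥ 2 be an integer, c(d) := Γ(d/2)/(2√π · Γ((d−1)/2)), and for r₁, r₂ > 0 define K_d(r₁, r₂) := −c(d) ∫₀^π log(r₁² + r₂² − 2 r₁ r₂ cos θ) (sin θ)^{d−2} dθ. Then for every t ∈ ℝ, K_d(e^{−t}, e^{−t}) − 2 K_d(e^{−t}, 1) + K_d(1, 1) = |t| + 2 c(d) ∫₀^π log((1 + e^{−2|t|} − 2 e^{−|t|} cos θ)/(2 − 2 cos θ)) (sin θ)^{d−2} dθ. -/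
/-!
Write `F(r₁, r₂) = ∫₀^π log (r₁² + r₂² − 2 r₁ r₂ cos θ) sin^{d−2} θ dθ`, so that `K = −c F`.
Scaling both radii by `s` adds `2 log s · ∫₀^π sin^{d−2}` to `F`, and the Gamma factors in `c` are
exactly those of the Wallis-type integral, so `c ∫₀^π sin^{d−2} = 1/2`. Scaling `(e^{−t}, e^{−t})`
down to `(1, 1)` and, for `t < 0`, `(e^{−t}, 1)` to `(1, e^t)`, the variance becomes `|t|` plus
`2c` times `F(e^{−|t|}, 1) − F(1, 1)`, which is the integral on the right.
-/

open Real MeasureTheory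

theorem integral_sin_pow_eq_sqrt_pi_mul_Gamma_div_Gamma (n : ℕ) :
    ∫ θ in 0..π, sin θ ^ n = √π * Gamma ((n + 1) / 2) / Gamma ((n + 2) / 2) := by
  induction n using Nat.twoStepInduction with
  | zero => norm_num [Gamma_one_half_eq, mul_self_sqrt pi_pos.le]
  | one =>
    rw [show ((1 : ℕ) + 2 : ℝ) / 2 = 1 / 2 + 1 by norm_num, Gamma_add_one (by norm_num)]
    norm_num [Gamma_one_half_eq]
    field_simp
  | more n ih _ =>
    have ha : ((n : ℝ) + 1) / 2 ≠ 0 := by positivity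
    have hb : ((n : ℝ) + 2) / 2 ≠ 0 := by positivity
    rw [integral_sin_pow, ih]
    push_cast
    rw [show ((n : ℝ) + 2 + 1) / 2 = (n + 1) / 2 + 1 by ring,
      show ((n : ℝ) + 2 + 2) / 2 = (n + 2) / 2 + 1 by ring, Gamma_add_one ha, Gamma_add_one hb]
    simp only [sin_zero, sin_pi, ne_eq, Nat.add_eq_zero_iff, one_ne_zero, and_false,
      not_false_eq_true, zero_pow, zero_mul, sub_self, zero_div, zero_add]
    field_simp

theorem Gamma_div_mul_integral_sin_pow (n : ℕ) :
    Gamma ((n + 2) / 2) / (2 * √π * Gamma ((n + 1) / 2)) * ∫ θ in 0..π, sin θ ^ n = 1 / 2 := by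
  have : Gamma ((n + 1) / 2) ≠ 0 := (Gamma_pos_of_pos (by positivity)).ne'
  have : Gamma ((n + 2) / 2) ≠ 0 := (Gamma_pos_of_pos (by positivity)).ne'
  have : √π ≠ 0 := (sqrt_pos.mpr pi_pos).ne'
  rw [integral_sin_pow_eq_sqrt_pi_mul_Gamma_div_Gamma]
  field_simp

theorem sq_add_sq_sub_two_mul_mul_cos_pos {r₁ r₂ θ : ℝ} (h₁ : 0 < r₁) (h₂ : 0 < r₂)
    (hθ : cos θ < 1) : 0 < r₁ ^ 2 + r₂ ^ 2 - 2 * r₁ * r₂ * cos θ := by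
  nlinarith [sq_nonneg (r₁ - r₂), mul_pos h₁ h₂]

/-- `r₁² + r₂² − 2 r₁ r₂ cos θ` is `‖x − y‖²` for `‖x‖ = r₁`, `‖y‖ = r₂` at angle `θ`; the weight
`sin^n θ` is the surface measure of `S^{n+1}` in polar angle about `y`. -/
noncomputable def sphericalLogIntegral (n : ℕ) (r₁ r₂ : ℝ) : ℝ :=
  ∫ θ in 0..π, log (r₁ ^ 2 + r₂ ^ 2 - 2 * r₁ * r₂ * cos θ) * sin θ ^ n

namespace sphericalLogIntegral

variable {n : ℕ}

theorem intervalIntegrable (r₁ r₂ a b : ℝ) : IntervalIntegrable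
    (fun θ ↦ log (r₁ ^ 2 + r₂ ^ 2 - 2 * r₁ * r₂ * cos θ) * sin θ ^ n) volume a b := by
  have hX : AnalyticOnNhd ℝ (fun θ ↦ r₁ ^ 2 + r₂ ^ 2 - 2 * r₁ * r₂ * cos θ) (Set.uIcc a b) :=
    fun θ _ ↦ by fun_prop
  exact hX.meromorphicOn.intervalIntegrable_log.mul_continuousOn (by fun_prop)

theorem comm (r₁ r₂ : ℝ) : sphericalLogIntegral n r₁ r₂ = sphericalLogIntegral n r₂ r₁ := by
  unfold sphericalLogIntegral
  ring_nf

theorem mul_mul {s r₁ r₂ : ℝ} (hs : s ≠ 0) (h₁ : 0 < r₁) (h₂ : 0 < r₂) :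
    sphericalLogIntegral n (s * r₁) (s * r₂)
      = 2 * log s * (∫ θ in 0..π, sin θ ^ n) + sphericalLogIntegral n r₁ r₂ := by
  have hpt : ∀ θ ∈ Set.Ioo 0 π,
      log ((s * r₁) ^ 2 + (s * r₂) ^ 2 - 2 * (s * r₁) * (s * r₂) * cos θ) * sin θ ^ n
        = 2 * log s * sin θ ^ n
          + log (r₁ ^ 2 + r₂ ^ 2 - 2 * r₁ * r₂ * cos θ) * sin θ ^ n := by
    intro θ hθ
    have hcos : cos θ < 1 := cos_zero ▸ cos_lt_cos_of_nonneg_of_le_pi le_rfl hθ.2.le hθ.1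
    have hX := sq_add_sq_sub_two_mul_mul_cos_pos h₁ h₂ hcos
    rw [show (s * r₁) ^ 2 + (s * r₂) ^ 2 - 2 * (s * r₁) * (s * r₂) * cos θ
        = s ^ 2 * (r₁ ^ 2 + r₂ ^ 2 - 2 * r₁ * r₂ * cos θ) by ring,
      log_mul (pow_ne_zero 2 hs) hX.ne', log_pow]
    push_cast
    ring
  unfold sphericalLogIntegral
  rw [intervalIntegral.integral_congr_Ioo_of_le pi_pos.le fun θ hθ ↦ hpt θ hθ,
    intervalIntegral.integral_add (Continuous.intervalIntegrable (by fun_prop) _ _)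
      (intervalIntegrable r₁ r₂ 0 π),
    intervalIntegral.integral_const_mul]

theorem inv_one {r : ℝ} (hr : 0 < r) :
    sphericalLogIntegral n r⁻¹ 1
      = sphericalLogIntegral n r 1 - 2 * log r * (∫ θ in 0..π, sin θ ^ n) := by
  rw [eq_sub_iff_add_eq', comm r⁻¹, ← mul_mul hr.ne' one_pos (inv_pos.mpr hr), mul_one,
    mul_inv_cancel₀ hr.ne']

theorem exp_neg_one (t : ℝ) :
    sphericalLogIntegral n (exp (-t)) 1
      = (|t| - t) * (∫ θ in 0..π, sin θ ^ n) + sphericalLogIntegral n (exp (-|t|)) 1 := by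
  rcases le_or_gt 0 t with ht | ht
  · rw [abs_of_nonneg ht, sub_self, zero_mul, zero_add]
  · rw [abs_of_neg ht, neg_neg, show exp t = (exp (-t))⁻¹ by rw [exp_neg, inv_inv],
      inv_one (exp_pos _), log_exp]
    ring

theorem integral_log_div_two_sub_two_cos {ρ : ℝ} (hρ : 0 < ρ) :
    ∫ θ in 0..π, log ((1 + ρ ^ 2 - 2 * ρ * cos θ) / (2 - 2 * cos θ)) * sin θ ^ n
      = sphericalLogIntegral n ρ 1 - sphericalLogIntegral n 1 1 := by
  have hpt : ∀ θ ∈ Set.Ioo 0 π,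
      log ((1 + ρ ^ 2 - 2 * ρ * cos θ) / (2 - 2 * cos θ)) * sin θ ^ n
        = log (ρ ^ 2 + 1 ^ 2 - 2 * ρ * 1 * cos θ) * sin θ ^ n
          - log (1 ^ 2 + 1 ^ 2 - 2 * 1 * 1 * cos θ) * sin θ ^ n := by
    intro θ hθ
    have hcos : cos θ < 1 := cos_zero ▸ cos_lt_cos_of_nonneg_of_le_pi le_rfl hθ.2.le hθ.1
    have hnum := sq_add_sq_sub_two_mul_mul_cos_pos hρ one_pos hcos
    have hden := sq_add_sq_sub_two_mul_mul_cos_pos one_pos one_pos hcos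
    rw [← sub_mul, ← log_div hnum.ne' hden.ne']
    ring_nf
  unfold sphericalLogIntegral
  rw [intervalIntegral.integral_congr_Ioo_of_le pi_pos.le fun θ hθ ↦ hpt θ hθ,
    intervalIntegral.integral_sub (intervalIntegrable ρ 1 0 π) (intervalIntegrable 1 1 0 π)]

end sphericalLogIntegral

open sphericalLogIntegral in
/-- Variance of the spherical average of the whole-space log-correlated Gaussian field:
`K_d(e^{−t}, e^{−t}) − 2K_d(e^{−t}, 1) + K_d(1, 1)` equals
`|t| + 2c(d) ∫₀^π log((1+e^{−2|t|}−2e^{−|t|}cos θ)/(2−2cos θ)) (sin θ)^{d−2} dθ`. -/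
theorem spherical_average_variance (d : ℕ) (hd : 2 ≤ d)
    (c : ℝ)
    (hc : c = Real.Gamma ((d : ℝ) / 2) /
      (2 * Real.sqrt Real.pi * Real.Gamma (((d : ℝ) - 1) / 2)))
    (K : ℝ → ℝ → ℝ)
    (hK : ∀ r₁ r₂ : ℝ, 0 < r₁ → 0 < r₂ →
      K r₁ r₂ = -c * ∫ θ in (0:ℝ)..Real.pi,
        Real.log (r₁ ^ 2 + r₂ ^ 2 - 2 * r₁ * r₂ * Real.cos θ) * (Real.sin θ) ^ (d - 2))
    (t : ℝ) :
    K (Real.exp (-t)) (Real.exp (-t)) - 2 * K (Real.exp (-t)) 1 + K 1 1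
      = |t| + 2 * c *
          ∫ θ in (0:ℝ)..Real.pi,
            Real.log ((1 + Real.exp (-(2 * |t|)) - 2 * Real.exp (-|t|) * Real.cos θ) /
                (2 - 2 * Real.cos θ)) * (Real.sin θ) ^ (d - 2) := by
  have hcI : c * ∫ θ in 0..π, sin θ ^ (d - 2) = 1 / 2 := by
    have hn : ((d - 2 : ℕ) : ℝ) = d - 2 := by push_cast [Nat.cast_sub hd]; ring
    have h := Gamma_div_mul_integral_sin_pow (d - 2)
    rwa [hn, show (d - 2 + 2 : ℝ) / 2 = d / 2 by ring,
      show (d - 2 + 1 : ℝ) / 2 = (d - 1) / 2 by ring, ← hc] at h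
  have hdiag : sphericalLogIntegral (d - 2) (exp (-t)) (exp (-t))
      = 2 * (-t) * (∫ θ in 0..π, sin θ ^ (d - 2)) + sphericalLogIntegral (d - 2) 1 1 := by
    simpa using mul_mul (n := d - 2) (exp_ne_zero (-t)) one_pos one_pos
  have hsq : exp (-(2 * |t|)) = exp (-|t|) ^ 2 := by rw [← exp_nat_mul]; ring_nf
  have hF : ∀ r₁ r₂ : ℝ, 0 < r₁ → 0 < r₂ → K r₁ r₂ = -c * sphericalLogIntegral (d - 2) r₁ r₂ := hK
  rw [hF _ _ (exp_pos _) (exp_pos _), hF _ _ (exp_pos _) one_pos, hF _ _ one_pos one_pos, hdiag,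
    exp_neg_one, hsq, integral_log_div_two_sub_two_cos (exp_pos _)]
  linear_combination (2 * |t|) * hcI
end

section
/- Let d ≥ 2 be an integer, c(d) := Γ(d/2)/(2√π · Γ((d−1)/2)), and for r₁, r₂ > 0 define K_d(r₁, r₂) := −c(d) ∫₀^π log(r₁² + r₂² − 2 r₁ r₂ cos θ) (sin θ)^{d−2} dθ. For (t, s) ∈ ℝ² with t ≠ s, the function G(t, s) := K_d(e^{−t}, e^{−s}) is partially differentiable in t, the partial derivative ∂_t G is partially differentiable in s, and ∂_s ∂_t G(t, s) = c(d) ∫₀^π (1 − cos θ · cosh(t − s))/(cos θ − cosh(t − s))² (sin θ)^{d−2} dθ. -/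
/-!
With `r = e^{-t}` and `ρ = e^{-s}` one has
`r² + ρ² - 2rρ cos θ = 2 e^{-(t+s)} (cosh (t - s) - cos θ)`, so off the diagonal `G(t, s)` is an
affine function of `t + s` minus `c F(t - s)`, where `F(u) = ∫₀^π log (cosh u - cos θ) sin^{d-2} θ dθ`.
Hence `∂_s ∂_t G(t, s) = c F''(t - s)`, and `F''` is computed by differentiating twice under the
integral sign. This is legitimate for `u ≠ 0`: there `cosh u - cos θ ≥ cosh u - 1 > 0`, so the
`u`-derivatives of the integrand are bounded uniformly in `θ` for `u` near a fixed `u₀ ≠ 0`.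
-/

open Real MeasureTheory Filter Topology

lemma cos_lt_cosh {u : ℝ} (hu : u ≠ 0) (θ : ℝ) : cos θ < cosh u :=
  (cos_le_one θ).trans_lt (one_lt_cosh.mpr hu)

lemma cosh_sub_one_pos {u : ℝ} (hu : u ≠ 0) : 0 < cosh u - 1 :=
  sub_pos.mpr (one_lt_cosh.mpr hu)

lemma cosh_sub_cos_pos {u : ℝ} (hu : u ≠ 0) (θ : ℝ) : 0 < cosh u - cos θ :=
  sub_pos.mpr (cos_lt_cosh hu θ)

lemma continuous_log_cosh_sub_cos {u : ℝ} (hu : u ≠ 0) :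
    Continuous fun θ => log (cosh u - cos θ) :=
  (continuous_const.sub continuous_cos).log fun θ => (cosh_sub_cos_pos hu θ).ne'

lemma hasDerivAt_log_cosh_sub_cos {u : ℝ} (hu : u ≠ 0) (θ : ℝ) :
    HasDerivAt (fun u => log (cosh u - cos θ)) (sinh u / (cosh u - cos θ)) u :=
  ((hasDerivAt_cosh u).sub_const (cos θ)).log (cosh_sub_cos_pos hu θ).ne'

lemma hasDerivAt_sinh_div_cosh_sub_cos {u : ℝ} (hu : u ≠ 0) (θ : ℝ) :
    HasDerivAt (fun u => sinh u / (cosh u - cos θ))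
      ((1 - cos θ * cosh u) / (cos θ - cosh u) ^ 2) u := by
  refine ((hasDerivAt_sinh u).div ((hasDerivAt_cosh u).sub_const (cos θ))
    (cosh_sub_cos_pos hu θ).ne').congr_deriv ?_
  rw [show (cos θ - cosh u) ^ 2 = (cosh u - cos θ) ^ 2 by ring]
  congr 1
  linear_combination cosh_sq_sub_sinh_sq u

lemma abs_sinh_div_cosh_sub_cos_le {u : ℝ} (hu : u ≠ 0) (θ : ℝ) :
    |sinh u / (cosh u - cos θ)| ≤ |sinh u| / (cosh u - 1) := by
  rw [abs_div, abs_of_pos (cosh_sub_cos_pos hu θ)]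
  exact div_le_div_of_nonneg_left (abs_nonneg _) (cosh_sub_one_pos hu)
    (by linarith [cos_le_one θ])

lemma abs_one_sub_cos_mul_cosh_div_le {u : ℝ} (hu : u ≠ 0) (θ : ℝ) :
    |(1 - cos θ * cosh u) / (cos θ - cosh u) ^ 2| ≤ (1 + cosh u) / (cosh u - 1) ^ 2 := by
  have hnum : |1 - cos θ * cosh u| ≤ 1 + cosh u := by
    rw [abs_le]
    constructor <;> nlinarith [neg_one_le_cos θ, cos_le_one θ, cosh_pos u]
  have hden : (cosh u - 1) ^ 2 ≤ (cos θ - cosh u) ^ 2 := by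
    rw [show (cos θ - cosh u) ^ 2 = (cosh u - cos θ) ^ 2 by ring]
    exact pow_le_pow_left₀ (cosh_sub_one_pos hu).le (by linarith [cos_le_one θ]) 2
  rw [abs_div, abs_of_nonneg (sq_nonneg (cos θ - cosh u))]
  exact div_le_div₀ ((abs_nonneg _).trans hnum) hnum
    (pow_pos (cosh_sub_one_pos hu) 2) hden

theorem hasDerivAt_intervalIntegral_mul_of_bounded_deriv {φ φ' : ℝ → ℝ → ℝ} {w : ℝ → ℝ}
    {a b u₀ C : ℝ} (hw : IntervalIntegrable w volume a b)
    (hφ : ∀ᶠ u in 𝓝 u₀, Continuous (φ u)) (hφ' : Continuous (φ' u₀))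
    (hderiv : ∀ᶠ u in 𝓝 u₀, ∀ θ, HasDerivAt (φ · θ) (φ' u θ) u)
    (hbound : ∀ᶠ u in 𝓝 u₀, ∀ θ, |φ' u θ| ≤ C) :
    HasDerivAt (fun u => ∫ θ in a..b, φ u θ * w θ) (∫ θ in a..b, φ' u₀ θ * w θ) u₀ := by
  have hwm := hw.def'.aestronglyMeasurable
  refine (intervalIntegral.hasDerivAt_integral_of_dominated_loc_of_deriv_le
    (F := fun u θ => φ u θ * w θ) (F' := fun u θ => φ' u θ * w θ)
    (bound := fun θ => C * |w θ|) (hderiv.and hbound) ?_ ?_ ?_ ?_ ?_ ?_).2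
  · exact hφ.mono fun u hu => hu.aestronglyMeasurable.mul hwm
  · exact hw.continuousOn_mul hφ.self_of_nhds.continuousOn
  · exact hφ'.aestronglyMeasurable.mul hwm
  · refine ae_of_all _ fun θ _ u hu => ?_
    rw [norm_mul]
    exact mul_le_mul_of_nonneg_right (hu.2 θ) (norm_nonneg _)
  · exact hw.abs.const_mul C
  · exact ae_of_all _ fun θ _ u hu => (hu.1 θ).mul_const (w θ)

section WeightedIntegrals

variable {w : ℝ → ℝ} {a b : ℝ}

lemma hasDerivAt_integral_log_cosh_sub_cos_mul (hw : IntervalIntegrable w volume a b)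
    {u₀ : ℝ} (hu₀ : u₀ ≠ 0) :
    HasDerivAt (fun u => ∫ θ in a..b, log (cosh u - cos θ) * w θ)
      (∫ θ in a..b, sinh u₀ / (cosh u₀ - cos θ) * w θ) u₀ := by
  have hne : ∀ᶠ u in 𝓝 u₀, u ≠ 0 := eventually_ne_nhds hu₀
  have hB : ContinuousAt (fun u => |sinh u| / (cosh u - 1)) u₀ :=
    continuous_sinh.abs.continuousAt.div (continuous_cosh.continuousAt.sub continuousAt_const)
      (cosh_sub_one_pos hu₀).ne'
  refine hasDerivAt_intervalIntegral_mul_of_bounded_deriv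
    (C := |sinh u₀| / (cosh u₀ - 1) + 1) hw
    (hne.mono fun u hu => continuous_log_cosh_sub_cos hu)
    (continuous_const.div (continuous_const.sub continuous_cos)
      fun θ => (cosh_sub_cos_pos hu₀ θ).ne')
    (hne.mono fun u hu θ => hasDerivAt_log_cosh_sub_cos hu θ) ?_
  filter_upwards [hne, hB.eventually_lt continuousAt_const (lt_add_one _)] with u hu hBu θ
  exact (abs_sinh_div_cosh_sub_cos_le hu θ).trans hBu.le

lemma hasDerivAt_integral_sinh_div_cosh_sub_cos_mul (hw : IntervalIntegrable w volume a b)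
    {u₀ : ℝ} (hu₀ : u₀ ≠ 0) :
    HasDerivAt (fun u => ∫ θ in a..b, sinh u / (cosh u - cos θ) * w θ)
      (∫ θ in a..b, (1 - cos θ * cosh u₀) / (cos θ - cosh u₀) ^ 2 * w θ) u₀ := by
  have hne : ∀ᶠ u in 𝓝 u₀, u ≠ 0 := eventually_ne_nhds hu₀
  have hB : ContinuousAt (fun u => (1 + cosh u) / (cosh u - 1) ^ 2) u₀ :=
    (continuous_const.add continuous_cosh).continuousAt.div
      ((continuous_cosh.sub continuous_const).pow 2).continuousAt
      (pow_pos (cosh_sub_one_pos hu₀) 2).ne'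
  refine hasDerivAt_intervalIntegral_mul_of_bounded_deriv
    (C := (1 + cosh u₀) / (cosh u₀ - 1) ^ 2 + 1) hw
    (hne.mono fun u hu => continuous_const.div (continuous_const.sub continuous_cos)
      fun θ => (cosh_sub_cos_pos hu θ).ne')
    ((continuous_const.sub (continuous_cos.mul continuous_const)).div
      ((continuous_cos.sub continuous_const).pow 2)
      fun θ => pow_ne_zero 2 (sub_neg.mpr (cos_lt_cosh hu₀ θ)).ne)
    (hne.mono fun u hu θ => hasDerivAt_sinh_div_cosh_sub_cos hu θ) ?_
  filter_upwards [hne, hB.eventually_lt continuousAt_const (lt_add_one _)] with u hu hBu θ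
  exact (abs_one_sub_cos_mul_cosh_div_le hu θ).trans hBu.le

lemma exp_sq_add_exp_sq_sub_mul_cos (t s θ : ℝ) :
    exp (-t) ^ 2 + exp (-s) ^ 2 - 2 * exp (-t) * exp (-s) * cos θ
      = 2 * exp (-(t + s)) * (cosh (t - s) - cos θ) := by
  simp only [cosh_eq, sub_eq_add_neg, neg_add, exp_add, exp_neg]
  field_simp
  ring

lemma integral_log_exp_sq_add_exp_sq_sub_mul_cos_mul (hw : IntervalIntegrable w volume a b)
    {t s : ℝ} (hts : t ≠ s) :
    ∫ θ in a..b, log (exp (-t) ^ 2 + exp (-s) ^ 2 - 2 * exp (-t) * exp (-s) * cos θ) * w θ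
      = (log 2 - (t + s)) * (∫ θ in a..b, w θ)
        + ∫ θ in a..b, log (cosh (t - s) - cos θ) * w θ := by
  have hu : t - s ≠ 0 := sub_ne_zero.mpr hts
  have hlog : ∀ θ, log (exp (-t) ^ 2 + exp (-s) ^ 2 - 2 * exp (-t) * exp (-s) * cos θ) * w θ
      = (log 2 - (t + s)) * w θ + log (cosh (t - s) - cos θ) * w θ := fun θ => by
    rw [exp_sq_add_exp_sq_sub_mul_cos, log_mul (by positivity) (cosh_sub_cos_pos hu θ).ne',
      log_mul two_ne_zero (exp_ne_zero _), log_exp]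
    ring
  simp_rw [hlog]
  rw [intervalIntegral.integral_add (hw.const_mul _)
    (hw.continuousOn_mul (continuous_log_cosh_sub_cos hu).continuousOn),
    intervalIntegral.integral_const_mul]

lemma hasDerivAt_integral_log_exp_sq_add_exp_sq_sub_mul_cos_mul
    (hw : IntervalIntegrable w volume a b) {t s : ℝ} (hts : t ≠ s) :
    HasDerivAt
      (fun t => ∫ θ in a..b,
        log (exp (-t) ^ 2 + exp (-s) ^ 2 - 2 * exp (-t) * exp (-s) * cos θ) * w θ)
      ((∫ θ in a..b, sinh (t - s) / (cosh (t - s) - cos θ) * w θ) - ∫ θ in a..b, w θ) t := by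
  have hF := (hasDerivAt_integral_log_cosh_sub_cos_mul hw (sub_ne_zero.mpr hts)).comp t
    ((hasDerivAt_id t).sub_const s)
  have hlin := (((hasDerivAt_id t).add_const s).const_sub (log 2)).mul_const (∫ θ in a..b, w θ)
  refine ((hlin.add hF).congr_deriv (by ring)).congr_of_eventuallyEq ?_
  filter_upwards [eventually_ne_nhds hts] with t' ht'
  exact integral_log_exp_sq_add_exp_sq_sub_mul_cos_mul hw ht'

end WeightedIntegrals

theorem mixed_partial_derivative_spherical_covariance_general (d : ℕ)
    (c : ℝ)
    (G : ℝ → ℝ → ℝ)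
    (hG : ∀ t s : ℝ, G t s = -c * ∫ θ in (0:ℝ)..Real.pi,
      Real.log ((Real.exp (-t)) ^ 2 + (Real.exp (-s)) ^ 2 -
        2 * Real.exp (-t) * Real.exp (-s) * Real.cos θ) * (Real.sin θ) ^ (d - 2))
    (t s : ℝ) (hts : t ≠ s) :
    DifferentiableAt ℝ (fun t' => G t' s) t ∧
    DifferentiableAt ℝ (fun s' => deriv (fun t' => G t' s') t) s ∧
    deriv (fun s' => deriv (fun t' => G t' s') t) s
      = c * ∫ θ in (0:ℝ)..Real.pi,
          (1 - Real.cos θ * Real.cosh (t - s)) / (Real.cos θ - Real.cosh (t - s)) ^ 2 *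
            (Real.sin θ) ^ (d - 2) := by
  have hw : IntervalIntegrable (fun θ => sin θ ^ (d - 2)) volume 0 π :=
    (continuous_sin.pow _).intervalIntegrable 0 π
  set I := ∫ θ in (0:ℝ)..π, sin θ ^ (d - 2)
  set F' := fun u => ∫ θ in (0:ℝ)..π, sinh u / (cosh u - cos θ) * sin θ ^ (d - 2)
  have hGt : ∀ s', s' ≠ t → HasDerivAt (fun t' => G t' s') (-c * (F' (t - s') - I)) t :=
    fun s' hs' => by
      simp_rw [hG]
      exact (hasDerivAt_integral_log_exp_sq_add_exp_sq_sub_mul_cos_mul hw hs'.symm).const_mul _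
  have hGt_eq : (fun s' => deriv (fun t' => G t' s') t) =ᶠ[𝓝 s]
      fun s' => -c * (F' (t - s') - I) :=
    (eventually_ne_nhds hts.symm).mono fun s' hs' => (hGt s' hs').deriv
  have hF' : HasDerivAt (fun s' => -c * (F' (t - s') - I))
      (c * ∫ θ in (0:ℝ)..π,
        (1 - cos θ * cosh (t - s)) / (cos θ - cosh (t - s)) ^ 2 * sin θ ^ (d - 2)) s := by
    have := (hasDerivAt_integral_sinh_div_cosh_sub_cos_mul hw (sub_ne_zero.mpr hts)).comp s
      ((hasDerivAt_id s).const_sub t)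
    exact ((this.sub_const I).const_mul (-c)).congr_deriv (by ring)
  exact ⟨(hGt s hts.symm).differentiableAt, hGt_eq.differentiableAt_iff.mpr hF'.differentiableAt,
    by rw [hGt_eq.deriv_eq, hF'.deriv]⟩

/-- The covariance of the spherical average process `G(t, s) = K_d(e^{−t}, e^{−s})` is
partially differentiable in `t`, its partial derivative is partially differentiable in `s`
off the diagonal, and the mixed second partial derivative equals
`c(d) ∫₀^π (1 − cos θ cosh(t−s))/(cos θ − cosh(t−s))² (sin θ)^{d−2} dθ`. -/
theorem mixed_partial_derivative_spherical_covariance (d : ℕ) (hd : 2 ≤ d)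
    (c : ℝ)
    (hc : c = Real.Gamma ((d : ℝ) / 2) /
      (2 * Real.sqrt Real.pi * Real.Gamma (((d : ℝ) - 1) / 2)))
    (G : ℝ → ℝ → ℝ)
    (hG : ∀ t s : ℝ, G t s = -c * ∫ θ in (0:ℝ)..Real.pi,
      Real.log ((Real.exp (-t)) ^ 2 + (Real.exp (-s)) ^ 2 -
        2 * Real.exp (-t) * Real.exp (-s) * Real.cos θ) * (Real.sin θ) ^ (d - 2))
    (t s : ℝ) (hts : t ≠ s) :
    DifferentiableAt ℝ (fun t' => G t' s) t ∧
    DifferentiableAt ℝ (fun s' => deriv (fun t' => G t' s') t) s ∧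
    deriv (fun s' => deriv (fun t' => G t' s') t) s
      = c * ∫ θ in (0:ℝ)..Real.pi,
          (1 - Real.cos θ * Real.cosh (t - s)) / (Real.cos θ - Real.cosh (t - s)) ^ 2 *
            (Real.sin θ) ^ (d - 2) :=
  mixed_partial_derivative_spherical_covariance_general d c G hG t s hts
end

section
/- Let p ≥ 1 be an integer and let λ₁, …, λ_p be distinct positive real numbers. Let A be the p × p Frobenius companion matrix of the monic polynomial ∏_{k=1}^p (λ + λ_k), let β ∈ ℝ with β ≠ 0, and let Ā and b̄ ∈ ℝ^{p+1} be the augmented matrix and vector: Ā is the (p+1) × (p+1) block matrix with top-left entry 0, top-right row e₁ᵀ = (1, 0, …, 0), bottom-left column 0 and bottom-right block A, and b̄ := β e_{p+1}. For t > 0 set Σ_t := ∫₀^t (exp(sĀ) b̄)(exp(sĀ) b̄)ᵀ ds. Then: (i) Σ_t is positive definite (in particular invertible) for every t > 0; and (ii) for every R > 0, lim_{t → ∞} sup_{x, y ∈ ℝ^{p+1}, ‖x‖ ≤ R, ‖y‖ ≤ R} ⟨Σ_t^{−1} exp(tĀ)(x − y), exp(tĀ)(x − y)⟩ = 0. -/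
/-!
`Ā` is the companion matrix of `λ ∏ (λ + λ_k)`, so it is diagonalised by the (transposed)
Vandermonde matrix `V` of its simple roots `ν = (0, -λ₁, …, -λ_p)`, and `b̄ = V c` with every
`c_j ≠ 0`. Hence `⟨v, e^{sĀ} b̄⟩ = ∑ d_j e^{ν_j s}` is an exponential sum whose coefficients
vanish only for `v = 0`, and `⟨Σ_t v, v⟩` is the integral of its square over `[0, t]`; this
gives positive definiteness.

Substituting `s ↦ t - s` gives `Σ_t = e^{tĀ} N_t (e^{tĀ})ᵀ`, where `N_t` is the Gramian of
`e^{-sĀ} b̄`, so the quantity in (ii) is `⟨N_t⁻¹ (x - y), x - y⟩ ≤ |x - y|² / λ_min(N_t)`.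
The exponents `-ν_j` of `N_t` are nonnegative, so `⟨N_t w, w⟩` increases to `∞` for every
`w ≠ 0`, and compactness of the unit sphere makes this uniform in `w`.
-/

open Matrix MeasureTheory Filter Topology Set Function NormedSpace

section ExpSum

variable {ι : Type*} [Fintype ι]

noncomputable def expSum (d a : ι → ℝ) (s : ℝ) : ℝ := ∑ j, d j * Real.exp (a j * s)

theorem continuous_expSum (d a : ι → ℝ) : Continuous (expSum d a) := by
  unfold expSum; fun_prop

theorem expSum_natCast_mul (d a : ι → ℝ) (δ : ℝ) (k : ℕ) :
    expSum d a (k * δ) = ∑ j, d j * Real.exp (a j * δ) ^ k := by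
  simp only [expSum, ← Real.exp_nat_mul]
  congr! 3
  ring

theorem eq_zero_of_forall_mem_Icc_expSum_eq_zero {d a : ι → ℝ} (ha : Injective a) {t : ℝ}
    (ht : 0 < t) (h : ∀ s ∈ Icc 0 t, expSum d a s = 0) : d = 0 := by
  set e := Fintype.equivFin ι
  set δ := t / (Fintype.card ι + 1)
  have hδ : 0 < δ := by positivity
  have hz : Injective fun k => Real.exp (a (e.symm k) * δ) := fun i j hij =>
    e.symm.injective (ha (mul_right_cancel₀ hδ.ne' (Real.exp_injective hij)))
  -- the samples `expSum d a (k * δ)`, `k < card ι`, form a Vandermonde system in `exp (a j * δ)`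
  have hde : d ∘ e.symm = 0 := by
    refine eq_zero_of_forall_pow_sum_mul_pow_eq_zero hz fun k => ?_
    rw [comp_def, e.symm.sum_comp (fun j => d j * Real.exp (a j * δ) ^ (k : ℕ)),
      ← expSum_natCast_mul]
    refine h _ ⟨by positivity, ?_⟩
    calc (k : ℝ) * δ ≤ (Fintype.card ι + 1) * δ := by
          gcongr; exact_mod_cast (k.is_lt.trans (Nat.lt_succ_self _)).le
      _ = t := mul_div_cancel₀ _ (by positivity)
  funext i
  simpa using congrFun hde (e i)

theorem exists_pos_eventually_le_abs_expSum {d a : ι → ℝ} (ha : Injective a)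
    (ha0 : ∀ j, 0 ≤ a j) (hd : d ≠ 0) : ∃ ε > 0, ∀ᶠ s in atTop, ε ≤ |expSum d a s| := by
  classical
  obtain ⟨j₀, hj₀, hmax⟩ := Finset.exists_max_image {j | d j ≠ 0} a
    (by simpa [Finset.Nonempty, funext_iff] using hd)
  replace hj₀ : d j₀ ≠ 0 := by simpa using hj₀
  -- the term with the largest exponent dominates
  have hlim : Tendsto (fun s => expSum d a s * Real.exp (-(a j₀ * s))) atTop (𝓝 (d j₀)) := by
    have hrw : ∀ s, expSum d a s * Real.exp (-(a j₀ * s))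
        = ∑ j, d j * Real.exp ((a j - a j₀) * s) := fun s => by
      simp only [expSum, Finset.sum_mul, mul_assoc, ← Real.exp_add]
      congr! 3
      ring
    have hsingle : d j₀ = ∑ j, if j = j₀ then d j₀ else 0 := by simp
    simp_rw [hrw]
    rw [hsingle]
    refine tendsto_finsetSum _ fun j _ => ?_
    split_ifs with hj
    · subst hj; simp
    · by_cases hdj : d j = 0
      · simp [hdj]
      have hlt : a j - a j₀ < 0 := sub_neg.2 <| (hmax j (by simpa using hdj)).lt_of_ne (ha.ne hj)
      simpa using
        (Real.tendsto_exp_atBot.comp (tendsto_id.const_mul_atTop_of_neg hlt)).const_mul (d j)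
  refine ⟨|d j₀| / 2, by positivity, ?_⟩
  filter_upwards [hlim.abs.eventually (lt_mem_nhds (half_lt_self (abs_pos.2 hj₀))),
    eventually_ge_atTop 0] with s hs hs0
  rw [abs_mul, abs_of_pos (Real.exp_pos _)] at hs
  have : Real.exp (-(a j₀ * s)) ≤ 1 := Real.exp_le_one_iff.2 (by nlinarith [ha0 j₀])
  nlinarith [abs_nonneg (expSum d a s)]

end ExpSum

theorem tendsto_integral_sq_atTop {g : ℝ → ℝ} (hg : Continuous g) {ε : ℝ} (hε : 0 < ε)
    (h : ∀ᶠ s in atTop, ε ≤ |g s|) : Tendsto (fun t => ∫ s in (0 : ℝ)..t, g s ^ 2) atTop atTop := by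
  obtain ⟨S, hS⟩ := eventually_atTop.1 h
  have hi : ∀ a b : ℝ, IntervalIntegrable (fun s => g s ^ 2) volume a b :=
    fun a b => (hg.pow 2).intervalIntegrable a b
  have key : ∀ t ≥ S,
      (∫ s in (0 : ℝ)..S, g s ^ 2) + ε ^ 2 * (t - S) ≤ ∫ s in (0 : ℝ)..t, g s ^ 2 := by
    intro t ht
    rw [← intervalIntegral.integral_add_adjacent_intervals (hi 0 S) (hi S t)]
    gcongr
    calc ε ^ 2 * (t - S) = ∫ _ in S..t, ε ^ 2 := by simp [mul_comm]
      _ ≤ _ := intervalIntegral.integral_mono_on ht intervalIntegrable_const (hi S t) fun s hs => by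
          nlinarith [hS s hs.1, sq_abs (g s)]
  refine tendsto_atTop_mono' _ (eventually_atTop.2 ⟨S, key⟩) ?_
  have hlin : Tendsto (fun t : ℝ => ε ^ 2 * (t - S)) atTop atTop := by
    simpa [sub_eq_add_neg] using
      (tendsto_atTop_add_const_right _ (-S) tendsto_id).const_mul_atTop (pow_pos hε 2)
  exact tendsto_atTop_add_const_left _ _ hlin

section Gramian

variable {n : Type*}

noncomputable def gramian (f : ℝ → n → ℝ) (t : ℝ) : Matrix n n ℝ :=
  of fun i j => ∫ s in (0 : ℝ)..t, f s i * f s j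

theorem gramian_comp_sub (f : ℝ → n → ℝ) (t : ℝ) :
    gramian (fun s => f (t - s)) t = gramian f t := by
  ext i j
  simpa [gramian] using
    intervalIntegral.integral_comp_sub_left (a := 0) (b := t) (fun s => f s i * f s j) t

theorem isHermitian_gramian (f : ℝ → n → ℝ) (t : ℝ) : (gramian f t).IsHermitian := by
  ext i j
  simp only [gramian, conjTranspose_apply, of_apply, star_trivial, mul_comm]

variable [Fintype n] {f : ℝ → n → ℝ}

theorem mul_gramian_mul_transpose {m : Type*} [Fintype m] (hf : Continuous f)
    (E : Matrix m n ℝ) (t : ℝ) :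
    E * gramian f t * Eᵀ = gramian (fun s => E *ᵥ f s) t := by
  ext i j
  simp only [gramian, mul_apply, of_apply, transpose_apply, mulVec, dotProduct, Finset.sum_mul,
    Finset.mul_sum]
  rw [intervalIntegral.integral_finsetSum fun l _ =>
    (by fun_prop : Continuous _).intervalIntegrable 0 t]
  refine Finset.sum_congr rfl fun l _ => ?_
  rw [intervalIntegral.integral_finsetSum fun k _ =>
    (by fun_prop : Continuous _).intervalIntegrable 0 t]
  refine Finset.sum_congr rfl fun k _ => ?_
  rw [← intervalIntegral.integral_const_mul, ← intervalIntegral.integral_mul_const]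
  congr 1 with s
  ring

theorem dotProduct_gramian_mulVec (hf : Continuous f) (t : ℝ) (v : n → ℝ) :
    v ⬝ᵥ (gramian f t *ᵥ v) = ∫ s in (0 : ℝ)..t, (v ⬝ᵥ f s) ^ 2 := by
  have := congrFun (congrFun (mul_gramian_mul_transpose hf (replicateRow Unit v) t) ()) ()
  simpa [gramian, mul_apply, dotProduct, mulVec, Finset.mul_sum, sq, mul_comm, mul_left_comm]
    using this

theorem posDef_gramian (hf : Continuous f) {t : ℝ} (ht : 0 < t)
    (h : ∀ v ≠ 0, ∃ s ∈ Icc 0 t, v ⬝ᵥ f s ≠ 0) : (gramian f t).PosDef := by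
  refine PosDef.of_dotProduct_mulVec_pos (isHermitian_gramian f t) fun v hv => ?_
  obtain ⟨s, hs, hvs⟩ := h v hv
  rw [star_trivial, dotProduct_gramian_mulVec hf]
  exact intervalIntegral.integral_pos ht (by fun_prop) (fun _ _ => sq_nonneg _)
    ⟨s, hs, pow_pos (abs_pos.2 hvs) 2 |>.trans_eq (sq_abs _)⟩

theorem monotone_dotProduct_gramian_mulVec (hf : Continuous f) (v : n → ℝ) :
    Monotone fun t => v ⬝ᵥ (gramian f t *ᵥ v) := by
  intro t₁ t₂ h
  have hi : ∀ a b : ℝ, IntervalIntegrable (fun s => (v ⬝ᵥ f s) ^ 2) volume a b :=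
    fun a b => (by fun_prop : Continuous _).intervalIntegrable a b
  simp only [dotProduct_gramian_mulVec hf]
  rw [← intervalIntegral.integral_add_adjacent_intervals (hi 0 t₁) (hi t₁ t₂)]
  exact le_add_of_nonneg_right (intervalIntegral.integral_nonneg h fun _ _ => sq_nonneg _)

end Gramian

section Exponential

variable {n : Type*} [Fintype n] [DecidableEq n]

theorem continuous_exp_smul_mulVec (M : Matrix n n ℝ) (b : n → ℝ) :
    Continuous fun s : ℝ => exp (s • M) *ᵥ b := by
  have : Continuous fun s : ℝ => exp (s • M) := by
    open scoped Norms.Operator in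
    exact exp_continuous.comp (continuous_id.smul continuous_const)
  fun_prop

theorem gramian_exp_smul_mulVec (M : Matrix n n ℝ) (b : n → ℝ) (t : ℝ) :
    gramian (fun s => exp (s • M) *ᵥ b) t
      = exp (t • M) * gramian (fun s => exp (s • -M) *ᵥ b) t * (exp (t • M))ᵀ := by
  rw [mul_gramian_mul_transpose (continuous_exp_smul_mulVec _ _), ← gramian_comp_sub]
  congr with s : 1
  rw [mulVec_mulVec,
    ← exp_add_of_commute _ _ (((Commute.refl M).smul_left t).neg_right.smul_right s),
    smul_neg, ← sub_eq_add_neg, ← sub_smul]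

variable {V : Matrix n n ℝ} {ν c : n → ℝ}

theorem exp_smul_conj_diagonal_mulVec (hV : IsUnit V) (s : ℝ) :
    exp (s • (V * diagonal ν * V⁻¹)) *ᵥ (V *ᵥ c) = V *ᵥ fun j => Real.exp (ν j * s) * c j := by
  have hdet : IsUnit V.det := (isUnit_iff_isUnit_det V).1 hV
  rw [← Matrix.smul_mul, ← Matrix.mul_smul, ← diagonal_smul, exp_conj _ _ hV, exp_diagonal,
    mulVec_mulVec, nonsing_inv_mul_cancel_right _ _ hdet, ← mulVec_mulVec]
  congr with j
  simp [mulVec_diagonal, Real.exp_eq_exp_ℝ, mul_comm]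

theorem dotProduct_exp_smul_conj_diagonal_mulVec (hV : IsUnit V) (v : n → ℝ) (s : ℝ) :
    v ⬝ᵥ (exp (s • (V * diagonal ν * V⁻¹)) *ᵥ (V *ᵥ c))
      = expSum (fun j => (v ᵥ* V) j * c j) ν s := by
  rw [exp_smul_conj_diagonal_mulVec hV, dotProduct_mulVec]
  simp only [dotProduct, expSum]
  congr! 1 with j
  ring

theorem vecMul_mul_ne_zero (hV : IsUnit V) (hc : ∀ j, c j ≠ 0) {v : n → ℝ} (hv : v ≠ 0) :
    (fun j => (v ᵥ* V) j * c j) ≠ 0 := by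
  intro h
  refine hv (vecMul_injective_iff_isUnit.2 hV ?_)
  funext j
  simpa [hc j] using congrFun h j

theorem posDef_gramian_exp_smul_conj_diagonal (hV : IsUnit V) (hν : Injective ν)
    (hc : ∀ j, c j ≠ 0) {t : ℝ} (ht : 0 < t) :
    (gramian (fun s => exp (s • (V * diagonal ν * V⁻¹)) *ᵥ (V *ᵥ c)) t).PosDef := by
  refine posDef_gramian (continuous_exp_smul_mulVec _ _) ht fun v hv => ?_
  by_contra! h
  simp only [dotProduct_exp_smul_conj_diagonal_mulVec hV] at h
  exact vecMul_mul_ne_zero hV hc hv (eq_zero_of_forall_mem_Icc_expSum_eq_zero hν ht h)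

theorem tendsto_dotProduct_gramian_exp_smul_conj_diagonal (hV : IsUnit V) (hν : Injective ν)
    (hν0 : ∀ j, 0 ≤ ν j) (hc : ∀ j, c j ≠ 0) {v : n → ℝ} (hv : v ≠ 0) :
    Tendsto (fun t => v ⬝ᵥ
      (gramian (fun s => exp (s • (V * diagonal ν * V⁻¹)) *ᵥ (V *ᵥ c)) t *ᵥ v)) atTop atTop := by
  obtain ⟨ε, hε, h⟩ := exists_pos_eventually_le_abs_expSum hν hν0 (vecMul_mul_ne_zero hV hc hv)
  simp only [dotProduct_gramian_mulVec (continuous_exp_smul_mulVec _ _),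
    dotProduct_exp_smul_conj_diagonal_mulVec hV]
  exact tendsto_integral_sq_atTop (continuous_expSum _ _) hε h

end Exponential

theorem IsCompact.eventually_forall_lt_of_monotone {X : Type*} [TopologicalSpace X] {K : Set X}
    (hK : IsCompact K) {q : ℝ → X → ℝ} (hq : ∀ t, Continuous (q t))
    (hmono : ∀ x, Monotone fun t => q t x)
    (htend : ∀ x ∈ K, Tendsto (fun t => q t x) atTop atTop) (m : ℝ) :
    ∀ᶠ t in atTop, ∀ x ∈ K, m < q t x := by
  obtain ⟨N, hN⟩ := hK.elim_directed_cover (fun N : ℕ => {x | m < q N x})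
    (fun N => isOpen_lt continuous_const (hq N))
    (fun x hx => mem_iUnion.2 ((htend x hx).comp tendsto_natCast_atTop_atTop
      |>.eventually_gt_atTop m).exists)
    (Monotone.directed_le fun N N' h x hx => hx.trans_le (hmono x (Nat.cast_le.2 h)))
  exact eventually_atTop.2 ⟨N, fun t ht x hx => (hN hx).trans_le (hmono x ht)⟩

section QuadraticForm

variable {n : Type*} [Fintype n]

theorem isCompact_setOf_dotProduct_self_eq_one : IsCompact {w : n → ℝ | w ⬝ᵥ w = 1} := by
  refine (isCompact_univ_pi fun _ => isCompact_Icc (a := -1) (b := 1)).of_isClosed_subset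
    (isClosed_eq (by fun_prop) continuous_const) fun w hw i _ => ?_
  have : w i * w i ≤ w ⬝ᵥ w :=
    Finset.single_le_sum (fun j _ => mul_self_nonneg (w j)) (Finset.mem_univ i)
  exact abs_le.1 (abs_le_one_iff_mul_self_le_one.2 (this.trans_eq hw))

theorem eventually_forall_mul_dotProduct_self_le {N : ℝ → Matrix n n ℝ}
    (hmono : ∀ w, Monotone fun t => w ⬝ᵥ (N t *ᵥ w))
    (htend : ∀ w ≠ 0, Tendsto (fun t => w ⬝ᵥ (N t *ᵥ w)) atTop atTop) (m : ℝ) :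
    ∀ᶠ t in atTop, ∀ w, m * (w ⬝ᵥ w) ≤ w ⬝ᵥ (N t *ᵥ w) := by
  have hsphere := isCompact_setOf_dotProduct_self_eq_one.eventually_forall_lt_of_monotone
    (fun t => by fun_prop) hmono
    (fun w hw => htend w fun h => by simp [h] at hw) m
  filter_upwards [hsphere] with t ht w
  rcases eq_or_ne w 0 with rfl | hw
  · simp
  have hww : 0 < w ⬝ᵥ w := (Finset.sum_nonneg fun i _ => mul_self_nonneg (w i)).lt_of_ne'
    (dotProduct_self_eq_zero.not.2 hw)
  set r := √(w ⬝ᵥ w)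
  have hr : 0 < r := Real.sqrt_pos.2 hww
  have hrr : r * r = w ⬝ᵥ w := Real.mul_self_sqrt hww.le
  have hunit := ht (r⁻¹ • w) (by
    simp only [smul_dotProduct, dotProduct_smul, smul_eq_mul, ← hrr]
    field_simp)
  simp only [mulVec_smul, smul_dotProduct, dotProduct_smul, smul_eq_mul] at hunit
  rw [← hrr]
  have := mul_lt_mul_of_pos_left hunit (mul_pos hr hr)
  field_simp at this
  linarith

theorem dotProduct_sub_self_le {x y : n → ℝ} {R : ℝ} (hx : √(∑ i, x i ^ 2) ≤ R)
    (hy : √(∑ i, y i ^ 2) ≤ R) : (x - y) ⬝ᵥ (x - y) ≤ 4 * R ^ 2 := by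
  have hR : 0 ≤ R := (Real.sqrt_nonneg _).trans hx
  rw [Real.sqrt_le_left hR] at hx hy
  calc (x - y) ⬝ᵥ (x - y) ≤ ∑ i, (2 * x i ^ 2 + 2 * y i ^ 2) :=
        Finset.sum_le_sum fun i _ => by simp only [Pi.sub_apply]; nlinarith [sq_nonneg (x i + y i)]
    _ ≤ 4 * R ^ 2 := by rw [Finset.sum_add_distrib, ← Finset.mul_sum, ← Finset.mul_sum]; linarith

variable [DecidableEq n]

theorem abs_dotProduct_inv_mulVec_le {N : Matrix n n ℝ} {m : ℝ} (hm : 0 < m)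
    (hN : ∀ w, m * (w ⬝ᵥ w) ≤ w ⬝ᵥ (N *ᵥ w)) (w : n → ℝ) :
    |(N⁻¹ *ᵥ w) ⬝ᵥ w| ≤ (w ⬝ᵥ w) / m := by
  have hunit : IsUnit N := by
    refine mulVec_injective_iff_isUnit.1 fun u₁ u₂ h =>
      sub_eq_zero.1 <| dotProduct_self_eq_zero.1 ?_
    have := hN (u₁ - u₂)
    rw [mulVec_sub, h, sub_self, dotProduct_zero] at this
    exact le_antisymm (nonpos_of_mul_nonpos_right this hm)
      (Finset.sum_nonneg fun i _ => mul_self_nonneg _)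
  set u := N⁻¹ *ᵥ w
  have hNu : N *ᵥ u = w := by
    rw [mulVec_mulVec, mul_nonsing_inv _ ((isUnit_iff_isUnit_det N).1 hunit), one_mulVec]
  have hlow : m * (u ⬝ᵥ u) ≤ u ⬝ᵥ w := hNu ▸ hN u
  have huu : 0 ≤ u ⬝ᵥ u := Finset.sum_nonneg fun i _ => mul_self_nonneg _
  -- AM–GM `2 m ⟨u, w⟩ ≤ m² ⟨u, u⟩ + ⟨w, w⟩` together with `hlow` gives `m ⟨u, w⟩ ≤ ⟨w, w⟩`
  have hsq : 0 ≤ m ^ 2 * (u ⬝ᵥ u) - 2 * m * (u ⬝ᵥ w) + w ⬝ᵥ w := by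
    have : 0 ≤ (m • u - w) ⬝ᵥ (m • u - w) :=
      Finset.sum_nonneg fun i _ => mul_self_nonneg ((m • u - w) i)
    simp only [sub_dotProduct, dotProduct_sub, smul_dotProduct, dotProduct_smul, smul_eq_mul,
      dotProduct_comm w u] at this
    linarith
  rw [abs_of_nonneg ((mul_nonneg hm.le huu).trans hlow), le_div_iff₀ hm]
  nlinarith

theorem dotProduct_mul_mul_transpose_inv_mulVec {E : Matrix n n ℝ} (hE : IsUnit E)
    (N : Matrix n n ℝ) (w : n → ℝ) :
    ((E * N * Eᵀ)⁻¹ *ᵥ (E *ᵥ w)) ⬝ᵥ (E *ᵥ w) = (N⁻¹ *ᵥ w) ⬝ᵥ w := by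
  have hdet : IsUnit E.det := (isUnit_iff_isUnit_det E).1 hE
  rw [Matrix.mul_inv_rev, Matrix.mul_inv_rev, mulVec_mulVec, Matrix.mul_assoc, Matrix.mul_assoc,
    nonsing_inv_mul _ hdet, Matrix.mul_one, ← mulVec_mulVec, dotProduct_comm, dotProduct_mulVec,
    ← transpose_nonsing_inv, vecMul_transpose, mulVec_mulVec, nonsing_inv_mul _ hdet, one_mulVec,
    dotProduct_comm]

end QuadraticForm

section Companion

open Polynomial

noncomputable def companion (q : ℝ[X]) (N : ℕ) : Matrix (Fin N) (Fin N) ℝ :=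
  of fun i j => if (j : ℕ) = (i : ℕ) + 1 then 1 else if (i : ℕ) = N - 1 then -q.coeff j else 0

variable {q : ℝ[X]} {N : ℕ}

theorem companion_mulVec_pow (hq : q.Monic) (hdeg : q.natDegree = N) {μ : ℝ} (hμ : q.IsRoot μ) :
    companion q N *ᵥ (fun i => μ ^ (i : ℕ)) = μ • fun i : Fin N => μ ^ (i : ℕ) := by
  funext i
  simp only [mulVec, dotProduct, companion, of_apply, Pi.smul_apply, smul_eq_mul]
  by_cases hi : (i : ℕ) + 1 < N
  · rw [Finset.sum_eq_single ⟨i + 1, hi⟩ (fun j _ hj => by simp [Fin.ext_iff.not.1 hj] at *; omega)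
      (by simp)]
    simp [pow_succ']
  · have hlast : (i : ℕ) = N - 1 := by omega
    have hsum : ∑ j : Fin N, q.coeff j * μ ^ (j : ℕ) + μ ^ N = 0 := by
      rw [Fin.sum_univ_eq_sum_range (fun j => q.coeff j * μ ^ j), ← hμ.eq_zero,
        eval_eq_sum_range, hdeg, Finset.sum_range_succ, ← hdeg, hq.coeff_natDegree, one_mul]
    have hpow : μ * μ ^ (i : ℕ) = μ ^ N := by rw [← pow_succ', hlast]; congr; omega
    have hrow : ∀ j : Fin N, (if (j : ℕ) = i + 1 then 1 else if (i : ℕ) = N - 1 then -q.coeff j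
        else 0) * μ ^ (j : ℕ) = -(q.coeff j * μ ^ (j : ℕ)) := fun j => by
      rw [if_neg (by omega), if_pos hlast, neg_mul]
    rw [Finset.sum_congr rfl fun j _ => hrow j, Finset.sum_neg_distrib, hpow]
    linarith

theorem isUnit_vandermonde_transpose {N : ℕ} {ν : Fin N → ℝ} (hν : Injective ν) :
    IsUnit (vandermonde ν)ᵀ :=
  (isUnit_iff_isUnit_det _).2 <| by
    rw [det_transpose]; exact (det_vandermonde_ne_zero_iff.2 hν).isUnit

theorem companion_eq_vandermonde_conj (hq : q.Monic) (hdeg : q.natDegree = N) {ν : Fin N → ℝ}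
    (hν : Injective ν) (hroot : ∀ j, q.IsRoot (ν j)) :
    companion q N = (vandermonde ν)ᵀ * diagonal ν * ((vandermonde ν)ᵀ)⁻¹ := by
  have hdet := (isUnit_iff_isUnit_det _).1 (isUnit_vandermonde_transpose hν)
  have hmul : companion q N * (vandermonde ν)ᵀ = (vandermonde ν)ᵀ * diagonal ν := by
    ext k l
    rw [mul_diagonal, mul_apply]
    simpa [mulVec, dotProduct, mul_comm] using
      congrFun (companion_mulVec_pow hq hdeg (hroot l)) k
  rw [← hmul, mul_nonsing_inv_cancel_right _ _ hdet]

theorem inv_vandermonde_transpose_mulVec_single_last_ne_zero {ν : Fin (N + 1) → ℝ}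
    (hν : Injective ν) {β : ℝ} (hβ : β ≠ 0) (j : Fin (N + 1)) :
    (((vandermonde ν)ᵀ)⁻¹ *ᵥ Pi.single (Fin.last N) β) j ≠ 0 := by
  set c := ((vandermonde ν)ᵀ)⁻¹ *ᵥ Pi.single (Fin.last N) β
  have hdet := (isUnit_iff_isUnit_det _).1 (isUnit_vandermonde_transpose hν)
  have hc : (vandermonde ν)ᵀ *ᵥ c = Pi.single (Fin.last N) β := by
    rw [mulVec_mulVec, mul_nonsing_inv _ hdet, one_mulVec]
  -- pair both sides with the coefficients of `P = ∏_{m ≠ j} (X - ν m)`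
  set P : ℝ[X] := ∏ m ∈ Finset.univ.erase j, (X - C (ν m))
  have hP : P.Monic := monic_prod_of_monic _ _ fun m _ => monic_X_sub_C _
  have hPdeg : P.natDegree = N := by
    rw [natDegree_prod_of_monic _ _ fun m _ => monic_X_sub_C _]; simp
  have heval : (fun k : Fin (N + 1) => P.coeff k) ᵥ* (vandermonde ν)ᵀ = fun m => P.eval (ν m) := by
    funext m
    rw [eval_eq_sum_range' (n := N + 1) (by omega), ← Fin.sum_univ_eq_sum_range]
    simp [vecMul, dotProduct]
  have key := congrArg ((fun k : Fin (N + 1) => P.coeff k) ⬝ᵥ ·) hc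
  simp only [dotProduct_mulVec, heval] at key
  have hlead : P.coeff N = 1 := hPdeg ▸ hP.coeff_natDegree
  rw [dotProduct_single, Fin.val_last, hlead, one_mul,
    dotProduct, Finset.sum_eq_single j (fun m _ hm => by simp [P, eval_prod, Finset.prod_eq_zero
      (Finset.mem_erase.2 ⟨hm, Finset.mem_univ m⟩)]) (by simp)] at key
  intro h0
  rw [h0, mul_zero] at key
  exact hβ key.symm

end Companion

theorem submatrix_conj_diagonal {m n : Type*} [Fintype m] [DecidableEq m] [Fintype n]
    [DecidableEq n] (V : Matrix m m ℝ) (ν : m → ℝ) (e : n ≃ m) :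
    (V * diagonal ν * V⁻¹).submatrix e e
      = V.submatrix e e * diagonal (ν ∘ e) * (V.submatrix e e)⁻¹ := by
  rw [inv_submatrix_equiv, ← submatrix_diagonal_equiv, submatrix_mul_equiv, submatrix_mul_equiv]

section Augmented

open Polynomial

def unitSumFinEquiv (p : ℕ) : Unit ⊕ Fin p ≃ Fin (p + 1) :=
  (Equiv.sumComm _ _).trans ((Equiv.optionEquivSumPUnit _).symm.trans (finSuccEquiv p).symm)

@[simp] theorem unitSumFinEquiv_inl (p : ℕ) (u : Unit) : unitSumFinEquiv p (.inl u) = 0 := by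
  simp [unitSumFinEquiv]

@[simp] theorem unitSumFinEquiv_inr {p : ℕ} (k : Fin p) : unitSumFinEquiv p (.inr k) = k.succ := by
  simp [unitSumFinEquiv]

theorem fromBlocks_companion_eq_submatrix (q : ℝ[X]) (p : ℕ) :
    fromBlocks (0 : Matrix Unit Unit ℝ) (of fun _ (j : Fin p) => if (j : ℕ) = 0 then (1 : ℝ) else 0)
      (0 : Matrix (Fin p) Unit ℝ) (companion q p)
      = (companion (X * q) (p + 1)).submatrix (unitSumFinEquiv p) (unitSumFinEquiv p) := by
  ext (_ | i) (_ | j) <;> simp [companion, coeff_X_mul] <;> split_ifs <;> first | rfl | omega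

theorem exists_conj_diagonal_of_augmented_companion {p : ℕ} (hp : 1 ≤ p) {lam : Fin p → ℝ}
    (hpos : ∀ k, 0 < lam k) (hinj : Injective lam) {β : ℝ} (hβ : β ≠ 0) :
    ∃ (V : Matrix (Unit ⊕ Fin p) (Unit ⊕ Fin p) ℝ) (ν c : Unit ⊕ Fin p → ℝ), IsUnit V ∧
      fromBlocks (0 : Matrix Unit Unit ℝ)
          (of fun _ (j : Fin p) => if (j : ℕ) = 0 then (1 : ℝ) else 0)
          (0 : Matrix (Fin p) Unit ℝ) (companion (∏ k, (X + C (lam k))) p)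
        = V * diagonal ν * V⁻¹ ∧
      Sum.elim (fun _ : Unit => (0 : ℝ)) (fun j : Fin p => if (j : ℕ) = p - 1 then β else 0)
        = V *ᵥ c ∧
      Injective ν ∧ (∀ j, ν j ≤ 0) ∧ ∀ j, c j ≠ 0 := by
  set χ : ℝ[X] := ∏ k, (X + C (lam k))
  set e := unitSumFinEquiv p
  set ν : Fin (p + 1) → ℝ := Fin.cons 0 fun k => -lam k
  have hν : Injective ν := Fin.cons_injective_iff.2
    ⟨fun ⟨k, hk⟩ => (hpos k).ne' (neg_eq_zero.1 hk), neg_injective.comp hinj⟩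
  have hν0 : ∀ i, ν i ≤ 0 := Fin.cases le_rfl fun k => neg_nonpos.2 (hpos k).le
  have hroot : ∀ i, (X * χ).IsRoot (ν i) := Fin.cases (by simp [ν]) fun k => by
    simp [ν, χ, eval_prod, Finset.prod_eq_zero (Finset.mem_univ k)]
  have hχ : χ.Monic := monic_prod_of_monic _ _ fun k _ => monic_X_add_C _
  have hdeg : (X * χ).natDegree = p + 1 := by
    rw [natDegree_X_mul hχ.ne_zero, natDegree_prod_of_monic _ _ fun k _ => monic_X_add_C _]
    simp
  set W := (vandermonde ν)ᵀ
  refine ⟨W.submatrix e e, ν ∘ e, (W⁻¹ *ᵥ Pi.single (Fin.last p) β) ∘ e,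
    (isUnit_submatrix_equiv e e).2 (isUnit_vandermonde_transpose hν), ?_, ?_,
    hν.comp e.injective, fun j => hν0 (e j),
    fun j => inv_vandermonde_transpose_mulVec_single_last_ne_zero hν hβ (e j)⟩
  · rw [fromBlocks_companion_eq_submatrix,
      companion_eq_vandermonde_conj (monic_X.mul hχ) hdeg hν hroot, submatrix_conj_diagonal]
  · rw [submatrix_mulVec_equiv, Function.comp_assoc, e.self_comp_symm, comp_id, mulVec_mulVec,
      mul_nonsing_inv _ ((isUnit_iff_isUnit_det _).1 (isUnit_vandermonde_transpose hν)), one_mulVec]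
    ext (_ | j) <;> simp [e, Pi.single_apply, Fin.ext_iff]
    · exact fun h => absurd h (by omega)
    · split_ifs <;> first | rfl | omega

end Augmented

/-- Mixing for the integrated multivariate Ornstein–Uhlenbeck process: with `A` the
companion matrix of `∏ (λ + λ_k)` for distinct positive `λ_k`, `Ā, b̄` the augmented
matrix and vector, and `Σ_t = ∫₀^t (e^{sĀ}b̄)(e^{sĀ}b̄)ᵀ ds`, the matrix `Σ_t` is
positive definite (in particular invertible) for `t > 0`, and
`sup_{‖x‖,‖y‖ ≤ R} ⟨Σ_t⁻¹ e^{tĀ}(x−y), e^{tĀ}(x−y)⟩ → 0` as `t → ∞`. -/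
theorem integrated_OU_mixing (p : ℕ) (hp : 1 ≤ p) (lam : Fin p → ℝ)
    (hpos : ∀ k, 0 < lam k) (hinj : Function.Injective lam)
    (A : Matrix (Fin p) (Fin p) ℝ)
    (hA : ∀ i j : Fin p, A i j =
      if (j : ℕ) = (i : ℕ) + 1 then 1
      else if (i : ℕ) = p - 1 then
        -((∏ k : Fin p, (Polynomial.X + Polynomial.C (lam k))).coeff (j : ℕ))
      else 0)
    (β : ℝ) (hβ : β ≠ 0)
    (Abar : Matrix (Unit ⊕ Fin p) (Unit ⊕ Fin p) ℝ)
    (hAbar : Abar = Matrix.fromBlocks (0 : Matrix Unit Unit ℝ)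
      (Matrix.of fun (_ : Unit) (j : Fin p) => if (j : ℕ) = 0 then (1 : ℝ) else 0)
      (0 : Matrix (Fin p) Unit ℝ) A)
    (bbar : (Unit ⊕ Fin p) → ℝ)
    (hbbar : bbar = Sum.elim (fun _ : Unit => (0 : ℝ))
      (fun j : Fin p => if (j : ℕ) = p - 1 then β else 0))
    (Sigm : ℝ → Matrix (Unit ⊕ Fin p) (Unit ⊕ Fin p) ℝ)
    (hSigm : ∀ t : ℝ, Sigm t = Matrix.of fun i j =>
      ∫ s in (0:ℝ)..t,
        (NormedSpace.exp (s • Abar) *ᵥ bbar) i * (NormedSpace.exp (s • Abar) *ᵥ bbar) j) :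
    (∀ t > (0:ℝ), (Sigm t).PosDef ∧ IsUnit (Sigm t)) ∧
    ∀ R > (0:ℝ), ∀ ε > (0:ℝ), ∃ T : ℝ, ∀ t ≥ T, ∀ x y : (Unit ⊕ Fin p) → ℝ,
      Real.sqrt (∑ i, x i ^ 2) ≤ R → Real.sqrt (∑ i, y i ^ 2) ≤ R →
      |((Sigm t)⁻¹ *ᵥ (NormedSpace.exp (t • Abar) *ᵥ (x - y))) ⬝ᵥ
          (NormedSpace.exp (t • Abar) *ᵥ (x - y))| < ε := by
  obtain ⟨V, ν, c, hV, hAV, hbV, hν, hν0, hc⟩ :=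
    exists_conj_diagonal_of_augmented_companion hp hpos hinj hβ
  obtain rfl : A = companion _ p := Matrix.ext hA
  obtain rfl : Abar = V * diagonal ν * V⁻¹ := hAbar.trans hAV
  obtain rfl : bbar = V *ᵥ c := hbbar.trans hbV
  obtain rfl : Sigm = gramian fun s => exp (s • (V * diagonal ν * V⁻¹)) *ᵥ (V *ᵥ c) :=
    funext hSigm
  refine ⟨fun t ht => ⟨posDef_gramian_exp_smul_conj_diagonal hV hν hc ht,
    (posDef_gramian_exp_smul_conj_diagonal hV hν hc ht).isUnit⟩, fun R _ ε hε => ?_⟩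
  have hneg : -(V * diagonal ν * V⁻¹) = V * diagonal (-ν) * V⁻¹ := by
    rw [show diagonal (-ν) = -diagonal ν from (diagonal_neg ν).symm, Matrix.mul_neg, Matrix.neg_mul]
  set m := 4 * R ^ 2 / ε + 1
  obtain ⟨T, hT⟩ := eventually_atTop.1 <| eventually_forall_mul_dotProduct_self_le
    (monotone_dotProduct_gramian_mulVec (continuous_exp_smul_mulVec _ _))
    (fun w hw => hneg ▸ tendsto_dotProduct_gramian_exp_smul_conj_diagonal hV
      (neg_injective.comp hν) (fun j => neg_nonneg.2 (hν0 j)) hc hw) m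
  refine ⟨T, fun t ht x y hx hy => ?_⟩
  rw [gramian_exp_smul_mulVec, dotProduct_mul_mul_transpose_inv_mulVec (Matrix.isUnit_exp _)]
  calc _ ≤ ((x - y) ⬝ᵥ (x - y)) / m := abs_dotProduct_inv_mulVec_le (by positivity) (hT t ht) _
    _ ≤ 4 * R ^ 2 / m := by gcongr; exact dotProduct_sub_self_le hx hy
    _ < ε := by
      rw [div_lt_iff₀ (by positivity), mul_add, mul_div_cancel₀ _ hε.ne', mul_one]
      linarith
end

section
/- Let (Ω, 𝓕, P) be a probability space and let Z : (0, 1] × Ω → [0, ∞) be jointly measurable and such that all the random variables Z_t := Z(t, ·), t ∈ (0, 1], have the same distribution. Let ε ∈ (0, 1) and s > 0 be such that P(Z₁ ≥ s) ≥ 1 − ε². Then P( for infinitely many n ∈ ℕ, ∫₀^{1/n} 1_{{Z_t ≥ s}} dt ≥ (1 − ε)/n ) ≥ 1 − ε; that is, the limsup over n of the events { ∫₀^{1/n} 1_{{Z_t ≥ s}} dt ≥ (1 − ε)/n } has probability at least 1 − ε. -/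
/-!
Let `X_n(ω) = ∫₀^{1/n} 1{Z_t(ω) ≥ s} dt`. Then `X_n ≤ 1/n`, and by Fubini and the equidistribution
of the `Z_t`, `E X_n ≥ (1 - ε²)/n`. For any `X ≤ c` one has `E X ≤ a + (c - a) P(X ≥ a)`, since
`X ≤ a + (c - a) 1{X ≥ a}` pointwise; with `c = 1/n` and `a = (1 - ε)/n` this gives
`P(X_n ≥ (1 - ε)/n) ≥ 1 - ε` for every `n ≥ 1`, and continuity from above carries the bound over
to the limsup of the events.
-/

open MeasureTheory ProbabilityTheory Set Filter

section ReverseMarkov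

variable {Ω : Type*} [MeasurableSpace Ω] {μ : Measure Ω} [IsProbabilityMeasure μ] {X : Ω → ℝ}
  {c : ℝ}

theorem integral_le_add_mul_measureReal_le (hX : Integrable X μ) (hXc : ∀ᵐ ω ∂μ, X ω ≤ c)
    (a : ℝ) : μ[X] ≤ a + (c - a) * μ.real {ω | a ≤ X ω} := by
  have hA : NullMeasurableSet {ω | a ≤ X ω} μ :=
    nullMeasurableSet_le aemeasurable_const hX.aemeasurable
  have hbound : ∀ᵐ ω ∂μ, X ω ≤ a + {ω | a ≤ X ω}.indicator (fun _ => c - a) ω := by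
    filter_upwards [hXc] with ω hω
    by_cases h : a ≤ X ω
    · simp [h, hω]
    · simp [h, le_of_not_ge h]
  calc μ[X] ≤ ∫ ω, (a + {ω | a ≤ X ω}.indicator (fun _ => c - a) ω) ∂μ :=
        integral_mono_ae hX ((integrable_const a).add ((integrable_const _).indicator₀ hA)) hbound
    _ = a + (c - a) * μ.real {ω | a ≤ X ω} := by
        rw [integral_add (integrable_const a) ((integrable_const _).indicator₀ hA),
          integral_indicator₀ hA, setIntegral_const]
        simp [mul_comm]

theorem one_sub_le_measureReal_of_one_sub_sq_mul_le_integral (hX : Integrable X μ)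
    (hXc : ∀ᵐ ω ∂μ, X ω ≤ c) (hc : 0 < c) {ε : ℝ} (hε : 0 < ε)
    (hmean : (1 - ε ^ 2) * c ≤ μ[X]) : 1 - ε ≤ μ.real {ω | (1 - ε) * c ≤ X ω} := by
  have h := hmean.trans (integral_le_add_mul_measureReal_le hX hXc ((1 - ε) * c))
  have hεc : 0 < ε * c := mul_pos hε hc
  nlinarith

end ReverseMarkov

theorem le_measure_limsup_atTop {α : Type*} [MeasurableSpace α] {μ : Measure α}
    [IsFiniteMeasure μ] {A : ℕ → Set α} (hA : ∀ n, MeasurableSet (A n)) {r : ENNReal}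
    (h : ∀ᶠ n in atTop, r ≤ μ (A n)) : r ≤ μ (limsup A atTop) := by
  have htail : Antitone fun m => ⋃ k ≥ m, A k := fun i j hij =>
    biUnion_subset_biUnion_left fun k hk => le_trans hij hk
  simp only [limsup_eq_iInf_iSup_of_nat, iInf_eq_iInter, iSup_eq_iUnion]
  rw [htail.measure_iInter
    (fun m => (MeasurableSet.biUnion (to_countable _) fun k _ => hA k).nullMeasurableSet)
    ⟨0, measure_ne_top μ _⟩]
  obtain ⟨N, hN⟩ := eventually_atTop.1 h
  refine le_iInf fun m => (hN (max m N) (le_max_right m N)).trans (measure_mono ?_)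
  exact subset_biUnion_of_mem (le_max_left m N)

section Slices

variable {α Ω : Type*} [MeasurableSpace α] [MeasurableSpace Ω] {ν : Measure α} {P : Measure Ω}
  [IsFiniteMeasure ν] [IsFiniteMeasure P] {T : Set (α × Ω)}

theorem mul_measureReal_univ_le_integral_integral_indicator (hT : MeasurableSet T) {r : ℝ}
    (h : ∀ᵐ t ∂ν, r ≤ P.real (Prod.mk t ⁻¹' T)) :
    r * ν.real univ ≤ ∫ ω, ∫ t, T.indicator (1 : α × Ω → ℝ) (t, ω) ∂ν ∂P := by
  have hint : Integrable (Function.uncurry fun t ω => T.indicator (1 : α × Ω → ℝ) (t, ω))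
      (ν.prod P) := (integrable_const 1).indicator hT
  have hslice : ∀ t, ∫ ω, T.indicator 1 (t, ω) ∂P = P.real (Prod.mk t ⁻¹' T) := fun t =>
    integral_indicator_one (measurable_prodMk_left hT)
  rw [← integral_integral_swap hint]
  calc r * ν.real univ = ∫ _, r ∂ν := by simp [mul_comm]
    _ ≤ ∫ t, ∫ ω, T.indicator 1 (t, ω) ∂P ∂ν := by
        refine integral_mono_ae (integrable_const r) hint.integral_prod_left ?_
        simp only [hslice]
        exact h

end Slices

section Occupation

variable {Ω : Type*} {Z : ℝ → Ω → ℝ} {s b : ℝ}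

-- Restricting to `t ∈ (0, 1]`, where `Z` is jointly measurable, makes this set measurable.
def occupationSet (Z : ℝ → Ω → ℝ) (s : ℝ) : Set (ℝ × Ω) :=
  {p | p.1 ∈ Ioc 0 1 ∧ s ≤ Z p.1 p.2}

noncomputable def occupationTime (Z : ℝ → Ω → ℝ) (s b : ℝ) (ω : Ω) : ℝ :=
  ∫ t in (0:ℝ)..b, Set.indicator {u : ℝ | s ≤ Z u ω} (fun _ => (1:ℝ)) t

theorem norm_occupationTime_le (hb : 0 ≤ b) (ω : Ω) : ‖occupationTime Z s b ω‖ ≤ b := by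
  have h := intervalIntegral.norm_integral_le_of_norm_le_const (a := 0) (b := b) (C := 1)
    (f := {u : ℝ | s ≤ Z u ω}.indicator fun _ => (1:ℝ)) fun t _ =>
      (norm_indicator_le_norm_self _ t).trans_eq norm_one
  rwa [one_mul, sub_zero, abs_of_nonneg hb] at h

theorem occupationTime_eq_setIntegral_indicator (hb₀ : 0 ≤ b) (hb₁ : b ≤ 1) (ω : Ω) :
    occupationTime Z s b ω = ∫ t in Ioc 0 b, (occupationSet Z s).indicator 1 (t, ω) := by
  rw [occupationTime, intervalIntegral.integral_of_le hb₀]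
  refine setIntegral_congr_fun measurableSet_Ioc fun t ht => ?_
  simp [occupationSet, indicator, ht.1, ht.2.trans hb₁]

variable [MeasurableSpace Ω]

theorem measurableSet_occupationSet (hZ : Measurable fun q : Ioc (0:ℝ) 1 × Ω => Z q.1 q.2) :
    MeasurableSet (occupationSet Z s) := by
  have hemb : MeasurableEmbedding fun q : Ioc (0:ℝ) 1 × Ω => ((q.1 : ℝ), q.2) :=
    (MeasurableEmbedding.subtype_coe measurableSet_Ioc).prodMap MeasurableEmbedding.id
  convert hemb.measurableSet_image.2
    (measurableSet_le (f := fun _ => s) measurable_const hZ) using 1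
  ext ⟨t, ω⟩
  simp [occupationSet, and_comm]

theorem measurable_occupationTime (hZ : Measurable fun q : Ioc (0:ℝ) 1 × Ω => Z q.1 q.2)
    (hb₀ : 0 ≤ b) (hb₁ : b ≤ 1) : Measurable (occupationTime Z s b) := by
  rw [funext (occupationTime_eq_setIntegral_indicator hb₀ hb₁)]
  exact (stronglyMeasurable_const.indicator
    (measurableSet_occupationSet hZ)).integral_prod_left'.measurable

theorem integrable_occupationTime {P : Measure Ω} [IsFiniteMeasure P]
    (hZ : Measurable fun q : Ioc (0:ℝ) 1 × Ω => Z q.1 q.2) (hb₀ : 0 ≤ b) (hb₁ : b ≤ 1) :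
    Integrable (occupationTime Z s b) P :=
  .of_bound (measurable_occupationTime hZ hb₀ hb₁).aestronglyMeasurable b
    (ae_of_all _ (norm_occupationTime_le hb₀))

theorem mul_le_integral_occupationTime {P : Measure Ω} [IsFiniteMeasure P]
    (hZ : Measurable fun q : Ioc (0:ℝ) 1 × Ω => Z q.1 q.2) (hb₀ : 0 ≤ b) (hb₁ : b ≤ 1) {r : ℝ}
    (hlevel : ∀ t ∈ Ioc (0:ℝ) 1, r ≤ P.real {ω | s ≤ Z t ω}) :
    r * b ≤ ∫ ω, occupationTime Z s b ω ∂P := by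
  have hslice : ∀ t ∈ Ioc 0 b, r ≤ P.real (Prod.mk t ⁻¹' occupationSet Z s) := fun t ht => by
    have ht₁ : t ∈ Ioc (0:ℝ) 1 := ⟨ht.1, ht.2.trans hb₁⟩
    convert hlevel t ht₁ using 2
    ext ω
    simp [occupationSet, ht₁.1, ht₁.2]
  simp_rw [occupationTime_eq_setIntegral_indicator hb₀ hb₁]
  convert mul_measureReal_univ_le_integral_integral_indicator (ν := volume.restrict (Ioc 0 b))
    (measurableSet_occupationSet hZ) ((ae_restrict_iff' measurableSet_Ioc).2 (ae_of_all _ hslice))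
    using 2
  simp [Real.volume_real_Ioc_of_le hb₀]

end Occupation

theorem limsup_occupation_lower_bound_general {Ω : Type*} [MeasurableSpace Ω]
    (P : Measure Ω) [IsProbabilityMeasure P]
    (Z : ℝ → Ω → ℝ)
    (hmeas : Measurable (fun q : Set.Ioc (0:ℝ) 1 × Ω => Z q.1 q.2))
    (hident : ∀ t ∈ Set.Ioc (0:ℝ) 1, P.map (Z t) = P.map (Z 1))
    (ε s : ℝ) (hε : ε ∈ Set.Ioo (0:ℝ) 1)
    (hZ1 : ENNReal.ofReal (1 - ε ^ 2) ≤ P {ω | s ≤ Z 1 ω}) :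
    ENNReal.ofReal (1 - ε) ≤
      P (Filter.atTop.limsup fun n : ℕ =>
        {ω | (1 - ε) / n ≤
          ∫ t in (0:ℝ)..(1 / (n:ℝ)), Set.indicator {u : ℝ | s ≤ Z u ω} (fun _ => (1:ℝ)) t}) := by
  have hsection : ∀ t ∈ Ioc (0:ℝ) 1, Measurable (Z t) := fun t ht =>
    hmeas.comp (measurable_prodMk_left (x := (⟨t, ht⟩ : Ioc (0:ℝ) 1)))
  have hlevel : ∀ t ∈ Ioc (0:ℝ) 1, 1 - ε ^ 2 ≤ P.real {ω | s ≤ Z t ω} := fun t ht => by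
    have hdist : IdentDistrib (Z t) (Z 1) P P :=
      ⟨(hsection t ht).aemeasurable, (hsection 1 ⟨one_pos, le_rfl⟩).aemeasurable, hident t ht⟩
    rw [measureReal_def, show {ω | s ≤ Z t ω} = Z t ⁻¹' Ici s from rfl,
      hdist.measure_mem_eq measurableSet_Ici]
    exact (ENNReal.ofReal_le_iff_le_toReal (measure_ne_top _ _)).1 hZ1
  have hb : ∀ n : ℕ, 0 ≤ 1 / (n:ℝ) ∧ 1 / (n:ℝ) ≤ 1 := fun n =>
    ⟨by positivity, (one_div (n:ℝ)).symm ▸ Nat.cast_inv_le_one n⟩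
  refine le_measure_limsup_atTop
    (fun n => measurableSet_le measurable_const (measurable_occupationTime hmeas (hb n).1 (hb n).2))
    (eventually_atTop.2 ⟨1, fun n hn => ENNReal.ofReal_le_of_le_toReal ?_⟩)
  have hc : 0 < 1 / (n:ℝ) := one_div_pos.2 (by exact_mod_cast hn)
  have h := one_sub_le_measureReal_of_one_sub_sq_mul_le_integral
    (integrable_occupationTime hmeas (hb n).1 (hb n).2)
    (ae_of_all _ fun ω => (Real.le_norm_self _).trans (norm_occupationTime_le (hb n).1 ω)) hc hε.1
    (mul_le_integral_occupationTime hmeas (hb n).1 (hb n).2 hlevel)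
  rw [mul_one_div] at h
  exact h

/-- If the random variables `Z_t`, `t ∈ (0,1]`, are nonnegative, jointly measurable and
identically distributed, and `P(Z₁ ≥ s) ≥ 1 − ε²`, then with probability at least `1 − ε`
there are infinitely many `n` with `∫₀^{1/n} 1_{Z_t ≥ s} dt ≥ (1 − ε)/n`. -/
theorem limsup_occupation_lower_bound {Ω : Type*} [MeasurableSpace Ω]
    (P : Measure Ω) [IsProbabilityMeasure P]
    (Z : ℝ → Ω → ℝ)
    (hmeas : Measurable (fun q : Set.Ioc (0:ℝ) 1 × Ω => Z q.1 q.2))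
    (hnonneg : ∀ t ∈ Set.Ioc (0:ℝ) 1, ∀ ω, 0 ≤ Z t ω)
    (hident : ∀ t ∈ Set.Ioc (0:ℝ) 1, P.map (Z t) = P.map (Z 1))
    (ε s : ℝ) (hε : ε ∈ Set.Ioo (0:ℝ) 1) (hs : 0 < s)
    (hZ1 : ENNReal.ofReal (1 - ε ^ 2) ≤ P {ω | s ≤ Z 1 ω}) :
    ENNReal.ofReal (1 - ε) ≤
      P (Filter.atTop.limsup fun n : ℕ =>
        {ω | (1 - ε) / n ≤
          ∫ t in (0:ℝ)..(1 / (n:ℝ)), Set.indicator {u : ℝ | s ≤ Z u ω} (fun _ => (1:ℝ)) t}) :=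
  limsup_occupation_lower_bound_general P Z hmeas hident ε s hε hZ1
end

section
/- Let d ≥ 2 be an integer and let f, g : ℝ^d → ℝ be Schwartz functions. Suppose f is radially symmetric about the origin (i.e., f(x) depends only on ‖x‖: there is F : [0, ∞) → ℝ with f(x) = F(‖x‖) for all x), and suppose g has mean zero on every sphere centred at the origin (i.e., for every r > 0, ∫_{S^{d−1}} g(rθ) dσ(θ) = 0, where σ is the surface measure on the unit sphere S^{d−1}). Then ∫_{ℝ^d} ‖ξ‖^d · 𝓕f(ξ) · conj(𝓕g(ξ)) dξ = 0, where 𝓕 denotes the Fourier transform 𝓕h(ξ) = (2π)^{−d/2} ∫_{ℝ^d} h(x) e^{−i ξ·x} dx and conj denotes complex conjugation. -/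
/-!
Write `Φ h (ξ) = ∫ h(x) exp(-i⟪ξ, x⟫) dx`. Since `Φ` commutes with rotations and maps Schwartz
functions to Schwartz functions, `ψ(ξ) = ‖ξ‖^d Φf(ξ)` is radial and integrable. The multiplication
formula `∫ ψ̄ · Φg = ∫ Φψ̄ · g` moves the transform onto the radial side, where `Φψ̄` is again radial
and bounded. In polar coordinates a radial factor is constant on each sphere, so `∫ Φψ̄ · g` is an
integral over radii of spherical means of `g`, all of which vanish.
-/

open MeasureTheory Metric Set Complex
open scoped Real ComplexConjugate FourierTransform SchwartzMap

noncomputable section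

def IsRadial {E α : Type*} [Norm E] (h : E → α) : Prop :=
  ∃ F : ℝ → α, ∀ x, h x = F ‖x‖

section Polar

variable {E F : Type*} [NormedAddCommGroup E] [NormedSpace ℝ E] [FiniteDimensional ℝ E]
  [MeasurableSpace E] [BorelSpace E] [Nontrivial E] (μ : Measure E) [μ.IsAddHaarMeasure]
  [NormedAddCommGroup F] [NormedSpace ℝ F]

theorem integral_eq_integral_Ioi_integral_sphere {φ : E → F} (hφ : Integrable φ μ) :
    ∫ x, φ x ∂μ = ∫ r : Ioi (0 : ℝ), ∫ θ : sphere (0 : E) 1, φ (r.1 • θ.1) ∂μ.toSphere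
      ∂(Measure.volumeIoiPow (Module.finrank ℝ E - 1)) := by
  set φ' : sphere (0 : E) 1 × Ioi (0 : ℝ) → F := fun p ↦ φ (p.2.1 • p.1.1)
  have hφ' : φ' ∘ homeomorphUnitSphereProd E = fun x ↦ φ x.1 := by
    funext x
    simp [φ', smul_inv_smul₀ (norm_ne_zero_iff.2 x.2)]
  have hmp := μ.measurePreserving_homeomorphUnitSphereProd
  have hemb := (homeomorphUnitSphereProd E).measurableEmbedding
  have hcompl : MeasurableSet ({0}ᶜ : Set E) := (measurableSet_singleton 0).compl
  have hint : Integrable φ' (μ.toSphere.prod (Measure.volumeIoiPow (Module.finrank ℝ E - 1))) := by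
    rw [← hmp.integrable_comp_emb hemb, hφ']
    exact (integrableOn_iff_comap_subtypeVal hcompl).1 hφ.integrableOn
  calc ∫ x, φ x ∂μ = ∫ x : ({0}ᶜ : Set E), φ x ∂μ.comap (↑) := by
        rw [integral_subtype_comap hcompl, restrict_compl_singleton]
    _ = ∫ p, φ' p ∂(μ.toSphere.prod (Measure.volumeIoiPow _)) := by
        rw [← hmp.integral_comp hemb, ← hφ']; rfl
    _ = _ := integral_prod_symm φ' hint

theorem IsRadial.integral_mul_eq_zero {𝕜 : Type*} [RCLike 𝕜] {ψ φ : E → 𝕜} (hψ : IsRadial ψ)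
    (hφ : ∀ r > (0 : ℝ), ∫ θ : sphere (0 : E) 1, φ (r • θ.1) ∂μ.toSphere = 0)
    (hint : Integrable (fun x ↦ ψ x * φ x) μ) :
    ∫ x, ψ x * φ x ∂μ = 0 := by
  obtain ⟨F, hF⟩ := hψ
  rw [integral_eq_integral_Ioi_integral_sphere μ hint]
  refine integral_eq_zero_of_ae (ae_of_all _ fun r ↦ ?_)
  have hnorm (θ : sphere (0 : E) 1) : ‖r.1 • θ.1‖ = r.1 := by
    rw [norm_smul, norm_eq_of_mem_sphere θ, mul_one, Real.norm_of_nonneg r.2.le]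
  simp only [hF, hnorm, integral_const_mul, hφ r.1 r.2, mul_zero, Pi.zero_apply]

end Polar

section InnerProductSpace

variable {E : Type*} [NormedAddCommGroup E] [InnerProductSpace ℝ E]

theorem IsRadial.of_forall_linearIsometryEquiv [Nontrivial E] {α : Type*} {h : E → α}
    (hh : ∀ (R : E ≃ₗᵢ[ℝ] E) x, h (R x) = h x) : IsRadial h := by
  obtain ⟨e, he⟩ := exists_norm_eq E zero_le_one
  refine ⟨fun t ↦ h (t • e), fun x ↦ ?_⟩
  have hx : ‖x‖ = ‖‖x‖ • e‖ := by rw [norm_smul, he, mul_one, norm_norm]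
  rw [← hh _ x, Submodule.reflection_sub hx]

theorem continuous_inv_two_pi_smul_inner :
    Continuous fun p : E × E ↦ ((2 * π)⁻¹ • innerₗ E) p.1 p.2 := by
  simp only [LinearMap.smul_apply, innerₗ_apply_apply]
  fun_prop

variable [FiniteDimensional ℝ E] [MeasurableSpace E] [BorelSpace E]

/-- Mathlib's `𝓕` has kernel `exp (-2πi⟪x, ξ⟫)`; pairing with `⟪x, ξ⟫ / 2π` instead gives the
kernel `exp (-i⟪ξ, x⟫)`. -/
def angularFourierIntegral (h : E → ℂ) : E → ℂ :=
  VectorFourier.fourierIntegral 𝐞 volume ((2 * π)⁻¹ • innerₗ E) h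

theorem angularFourierIntegral_apply (h : E → ℂ) (ξ : E) :
    angularFourierIntegral h ξ = ∫ x, h x * exp (-I * ((inner ℝ ξ x : ℝ) : ℂ)) := by
  simp only [angularFourierIntegral, VectorFourier.fourierIntegral, Circle.smul_def,
    Real.fourierChar_apply, LinearMap.smul_apply, innerₗ_apply_apply, smul_eq_mul]
  congr 1 with x
  rw [mul_comm, real_inner_comm]
  congr 2
  push_cast
  field_simp

theorem angularFourierIntegral_eq_fourier (h : E → ℂ) (ξ : E) :
    angularFourierIntegral h ξ = 𝓕 h ((2 * π)⁻¹ • ξ) := by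
  simp only [angularFourierIntegral, VectorFourier.fourierIntegral, Real.fourier_eq,
    LinearMap.smul_apply, innerₗ_apply_apply, inner_smul_right, smul_eq_mul]

theorem norm_angularFourierIntegral_le (h : E → ℂ) (ξ : E) :
    ‖angularFourierIntegral h ξ‖ ≤ ∫ x, ‖h x‖ :=
  VectorFourier.norm_fourierIntegral_le_integral_norm _ _ _ _ _

theorem continuous_angularFourierIntegral {h : E → ℂ} (hh : Integrable h) :
    Continuous (angularFourierIntegral h) :=
  VectorFourier.fourierIntegral_continuous Real.continuous_fourierChar
    continuous_inv_two_pi_smul_inner hh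

theorem integral_angularFourierIntegral_mul_eq_flip {φ ψ : E → ℂ} (hφ : Integrable φ)
    (hψ : Integrable ψ) :
    ∫ ξ, angularFourierIntegral φ ξ * ψ ξ = ∫ x, φ x * angularFourierIntegral ψ x := by
  have hflip : ((2 * π)⁻¹ • innerₗ E).flip = (2 * π)⁻¹ • innerₗ E := by
    ext x y
    simp [real_inner_comm]
  have := VectorFourier.integral_fourierIntegral_smul_eq_flip (μ := volume) (ν := volume)
    Real.continuous_fourierChar continuous_inv_two_pi_smul_inner hφ hψ
  rwa [hflip] at this

theorem isRadial_angularFourierIntegral [Nontrivial E] {h : E → ℂ} (hh : IsRadial h) :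
    IsRadial (angularFourierIntegral h) := by
  obtain ⟨F, hF⟩ := hh
  refine .of_forall_linearIsometryEquiv fun R ξ ↦ ?_
  simp only [angularFourierIntegral_apply]
  rw [← R.measurePreserving.integral_comp R.toHomeomorph.measurableEmbedding]
  simp [hF, R.inner_map_map]

theorem SchwartzMap.integrable_pow_mul_angularFourierIntegral (h : 𝓢(E, ℂ)) (k : ℕ) :
    Integrable fun ξ ↦ (‖ξ‖ ^ k : ℂ) * angularFourierIntegral h ξ := by
  have hπ : (2 * π)⁻¹ ≠ 0 := by positivity
  set S : 𝓢(E, ℂ) := compCLMOfContinuousLinearEquiv ℂ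
    (ContinuousLinearEquiv.smulLeft (Units.mk0 _ hπ)) (𝓕 h)
  have hS : ⇑S = angularFourierIntegral h := by
    funext ξ
    rw [angularFourierIntegral_eq_fourier]
    rfl
  refine (integrable_norm_iff ?_).1 ?_
  · rw [← hS]; fun_prop
  · simpa [hS] using S.integrable_pow_mul volume k

theorem integral_mul_conj_angularFourierIntegral_eq_zero [Nontrivial E] {ψ g : E → ℂ}
    (hψ : IsRadial ψ) (hψi : Integrable ψ) (hgi : Integrable g)
    (hg : ∀ r > (0 : ℝ), ∫ θ : sphere (0 : E) 1, g (r • θ.1) ∂(volume : Measure E).toSphere = 0) :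
    ∫ ξ, ψ ξ * conj (angularFourierIntegral g ξ) = 0 := by
  obtain ⟨F, hF⟩ := hψ
  set ψc : E → ℂ := fun ξ ↦ conj (ψ ξ)
  have hψc : Integrable ψc := Complex.conjCLE.toContinuousLinearMap.integrable_comp hψi
  have hΨ : IsRadial (angularFourierIntegral ψc) :=
    isRadial_angularFourierIntegral ⟨fun t ↦ conj (F t), fun ξ ↦ by simp [ψc, hF]⟩
  have hΨg : Integrable fun x ↦ angularFourierIntegral ψc x * g x :=
    hgi.bdd_mul (continuous_angularFourierIntegral hψc).aestronglyMeasurable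
      (ae_of_all _ (norm_angularFourierIntegral_le ψc))
  calc ∫ ξ, ψ ξ * conj (angularFourierIntegral g ξ)
      = conj (∫ ξ, ψc ξ * angularFourierIntegral g ξ) := by simp [ψc, ← integral_conj]
    _ = conj (∫ x, angularFourierIntegral ψc x * g x) := by
        rw [integral_angularFourierIntegral_mul_eq_flip hψc hgi]
    _ = 0 := by rw [hΨ.integral_mul_eq_zero volume hg hΨg, map_zero]

end InnerProductSpace

end

/-- Orthogonality in the homogeneous Sobolev space of order `d/2`: if `f` is a radially
symmetric Schwartz function and `g` is a Schwartz function with zero mean on every sphere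
centred at the origin, then `∫ ‖ξ‖^d 𝓕f(ξ) conj(𝓕g(ξ)) dξ = 0`, where
`𝓕h(ξ) = (2π)^{−d/2} ∫ h(x) e^{−i ξ·x} dx`. -/
theorem radial_sphericalMeanZero_orthogonal (d : ℕ) (hd : 2 ≤ d)
    (f g : SchwartzMap (EuclideanSpace ℝ (Fin d)) ℝ)
    (hf : ∃ F : ℝ → ℝ, ∀ x, f x = F ‖x‖)
    (hg : ∀ r > (0:ℝ),
      (∫ θ : Metric.sphere (0 : EuclideanSpace ℝ (Fin d)) 1,
          g (r • (θ : EuclideanSpace ℝ (Fin d)))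
        ∂((volume : Measure (EuclideanSpace ℝ (Fin d))).toSphere)) = 0) :
    (∫ ξ : EuclideanSpace ℝ (Fin d),
        ((‖ξ‖ ^ d : ℝ) : ℂ) *
          ((((2 * Real.pi) ^ (-(d : ℝ) / 2) : ℝ) : ℂ) *
            ∫ x : EuclideanSpace ℝ (Fin d),
              (f x : ℂ) * Complex.exp (-Complex.I * ((inner ℝ ξ x : ℝ) : ℂ))) *
          (starRingEnd ℂ)
            ((((2 * Real.pi) ^ (-(d : ℝ) / 2) : ℝ) : ℂ) *
              ∫ x : EuclideanSpace ℝ (Fin d),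
                (g x : ℂ) * Complex.exp (-Complex.I * ((inner ℝ ξ x : ℝ) : ℂ))))
      = 0 := by
  have : Nonempty (Fin d) := ⟨⟨0, by omega⟩⟩
  set c : ℂ := (((2 * π) ^ (-(d : ℝ) / 2) : ℝ) : ℂ)
  set fC := f.postcompCLM Complex.ofRealCLM
  set gC := g.postcompCLM Complex.ofRealCLM
  set ψ := fun ξ : EuclideanSpace ℝ (Fin d) ↦ c * c * ((‖ξ‖ ^ d : ℂ) * angularFourierIntegral fC ξ)
  have hfC : IsRadial fC := by
    obtain ⟨F, hF⟩ := hf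
    exact ⟨fun t ↦ (F t : ℂ), fun x ↦ by simp [fC, hF]⟩
  have hψ : IsRadial ψ := by
    obtain ⟨F, hF⟩ := isRadial_angularFourierIntegral hfC
    exact ⟨fun t ↦ c * c * (t ^ d * F t), fun ξ ↦ by simp [ψ, hF]⟩
  have hψi : Integrable ψ := (fC.integrable_pow_mul_angularFourierIntegral d).const_mul _
  have hgC : ∀ r > (0 : ℝ), ∫ θ : sphere (0 : EuclideanSpace ℝ (Fin d)) 1, gC (r • θ.1)
      ∂(volume : Measure (EuclideanSpace ℝ (Fin d))).toSphere = 0 := fun r hr ↦ by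
    simp [gC, integral_complex_ofReal, hg r hr]
  convert integral_mul_conj_angularFourierIntegral_eq_zero hψ hψi gC.integrable hgC using 2
  funext ξ
  simp only [ψ, angularFourierIntegral_apply, map_mul, c, conj_ofReal, fC, gC,
    SchwartzMap.postcompCLM_apply, ofRealCLM_apply]
  push_cast
  ring
end
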